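/- arXiv:2003.10281 — 7 statements merged into one kernel-verified Lean document; each statement's English description precedes it below -/
import Mathlib

section
/- For any matrices B ∈ ℝ^{m×k}, C ∈ ℝ^{n×k} with BCᵀ = X, the nuclear norm of X satisfies ‖X‖_* ≤ (‖B‖_F² + ‖C‖_F²)/2, with equality attained for B = L√Σ, C = R√Σ where X = LΣRᵀ is an SVD of X. Hence ‖X‖_* = min over factorizations BCᵀ = X of (‖B‖_F² + ‖C‖_F²)/2. -/
open Matrix BigOperators

lemma frob_eq_trace {a b : ℕ} (A : Matrix (Fin a) (Fin b) ℝ) :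
    ∑ i, ∑ j, A i j ^ 2 = (Aᵀ * A).trace := by
  simp only [Matrix.trace, Matrix.diag, Matrix.mul_apply, Matrix.transpose_apply, sq]
  rw [Finset.sum_comm]

lemma trace_mul_transpose' {a b : ℕ} (U V : Matrix (Fin a) (Fin b) ℝ) :
    (U * Vᵀ).trace = ∑ i, ∑ j, U i j * V i j := by
  simp [Matrix.trace, Matrix.diag, Matrix.mul_apply]

lemma proj_frob_le {a b r : ℕ} (L : Matrix (Fin a) (Fin r) ℝ) (hL : Lᵀ * L = 1)
    (B : Matrix (Fin a) (Fin b) ℝ) :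
    ∑ i, ∑ j, (Lᵀ * B) i j ^ 2 ≤ ∑ i, ∑ j, B i j ^ 2 := by
  have key : ∑ i, ∑ j, B i j ^ 2 - ∑ i, ∑ j, (Lᵀ * B) i j ^ 2
      = ∑ i, ∑ j, (((1 - L * Lᵀ) * B : Matrix (Fin a) (Fin b) ℝ)) i j ^ 2 := by
    rw [frob_eq_trace, frob_eq_trace, frob_eq_trace]
    have h1 : ((1 - L * Lᵀ) * B)ᵀ * ((1 - L * Lᵀ) * B) = Bᵀ * B - (Lᵀ * B)ᵀ * (Lᵀ * B) := by
      have hP : (L * Lᵀ) * (L * Lᵀ) = L * Lᵀ := by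
        calc (L * Lᵀ) * (L * Lᵀ) = L * ((Lᵀ * L) * Lᵀ) := by simp only [Matrix.mul_assoc]
        _ = L * Lᵀ := by rw [hL]; simp [Matrix.mul_assoc]
      have ht : ((1 - L * Lᵀ) * B)ᵀ = Bᵀ * (1 - L * Lᵀ) := by
        simp [Matrix.transpose_mul, Matrix.transpose_sub]
      rw [ht]
      have : Bᵀ * (1 - L * Lᵀ) * ((1 - L * Lᵀ) * B) = Bᵀ * ((1 - L * Lᵀ) * (1 - L * Lᵀ)) * B := by
        simp only [Matrix.mul_assoc]
      rw [this]
      have h2 : (1 - L * Lᵀ) * (1 - L * Lᵀ) = 1 - L * Lᵀ := by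
        rw [Matrix.sub_mul, Matrix.mul_sub, Matrix.mul_sub, hP]; noncomm_ring
      rw [h2]
      simp [Matrix.transpose_mul, Matrix.mul_sub, Matrix.sub_mul, Matrix.mul_assoc]
    rw [h1, Matrix.trace_sub]
  have hnn : 0 ≤ ∑ i, ∑ j, (((1 - L * Lᵀ) * B : Matrix (Fin a) (Fin b) ℝ)) i j ^ 2 :=
    Finset.sum_nonneg fun i _ => Finset.sum_nonneg fun j _ => sq_nonneg _
  linarith [key]

/-- For any factorization B Cᵀ = X the nuclear norm (sum of singular values) of X
is bounded by (‖B‖_F² + ‖C‖_F²)/2, with equality for B = L√Σ, C = R√Σ where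
X = L Σ Rᵀ is a compact SVD of X. -/
theorem nuclear_norm_eq_min_factorization {m n r : ℕ}
    (X : Matrix (Fin m) (Fin n) ℝ)
    (L : Matrix (Fin m) (Fin r) ℝ) (R : Matrix (Fin n) (Fin r) ℝ) (d : Fin r → ℝ)
    (hL : Lᵀ * L = 1) (hR : Rᵀ * R = 1) (hd : ∀ i, 0 < d i)
    (hX : X = L * Matrix.diagonal d * Rᵀ) :
    (∀ (k : ℕ) (B : Matrix (Fin m) (Fin k) ℝ) (C : Matrix (Fin n) (Fin k) ℝ),
        B * Cᵀ = X →
        ∑ i, d i ≤ ((∑ i, ∑ j, B i j ^ 2) + ∑ i, ∑ j, C i j ^ 2) / 2) ∧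
    ((L * Matrix.diagonal fun i => Real.sqrt (d i)) *
        (R * Matrix.diagonal fun i => Real.sqrt (d i))ᵀ = X ∧
      ((∑ i, ∑ j, (L * Matrix.diagonal fun i => Real.sqrt (d i)) i j ^ 2) +
        ∑ i, ∑ j, (R * Matrix.diagonal fun i => Real.sqrt (d i)) i j ^ 2) / 2 =
        ∑ i, d i) := by
  constructor
  · intro k B C hBC
    -- trace identity: ∑ d = trace (Lᵀ * B * (Rᵀ * C)ᵀ)
    have hDiag : Lᵀ * X * R = Matrix.diagonal d := by
      rw [hX]
      calc Lᵀ * (L * Matrix.diagonal d * Rᵀ) * R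
          = (Lᵀ * L) * (Matrix.diagonal d * (Rᵀ * R)) := by simp only [Matrix.mul_assoc]
        _ = Matrix.diagonal d * (Rᵀ * R) := by rw [hL, Matrix.one_mul]
        _ = Matrix.diagonal d := by rw [hR, Matrix.mul_one]
    have htr : ∑ i, d i = ((Lᵀ * B) * (Rᵀ * C)ᵀ).trace := by
      have : (Lᵀ * B) * (Rᵀ * C)ᵀ = Lᵀ * X * R := by
        rw [← hBC]
        simp [Matrix.transpose_mul, Matrix.mul_assoc]
      rw [this, hDiag, Matrix.trace_diagonal]
    rw [htr, trace_mul_transpose']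
    have hs : ∑ i, ∑ j, 2 * ((Lᵀ * B) i j * (Rᵀ * C) i j)
        ≤ ∑ i, ∑ j, ((Lᵀ * B) i j ^ 2 + (Rᵀ * C) i j ^ 2) := by
      refine Finset.sum_le_sum fun i _ => Finset.sum_le_sum fun j _ => ?_
      have := two_mul_le_add_sq ((Lᵀ * B) i j) ((Rᵀ * C) i j)
      linarith
    have e1 : ∑ i, ∑ j, 2 * ((Lᵀ * B) i j * (Rᵀ * C) i j)
        = 2 * ∑ i, ∑ j, (Lᵀ * B) i j * (Rᵀ * C) i j := by
      simp [Finset.mul_sum]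
    have e2 : ∑ i, ∑ j, ((Lᵀ * B) i j ^ 2 + (Rᵀ * C) i j ^ 2)
        = (∑ i, ∑ j, (Lᵀ * B) i j ^ 2) + ∑ i, ∑ j, (Rᵀ * C) i j ^ 2 := by
      simp [Finset.sum_add_distrib]
    have h1 := proj_frob_le L hL B
    have h2 := proj_frob_le R hR C
    rw [e1] at hs
    rw [e2] at hs
    linarith
  · constructor
    · rw [hX]
      have : (R * Matrix.diagonal fun i => Real.sqrt (d i))ᵀ
          = (Matrix.diagonal fun i => Real.sqrt (d i)) * Rᵀ := by
        simp [Matrix.transpose_mul, Matrix.diagonal_transpose]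
      rw [this]
      have hdd : (Matrix.diagonal fun i => Real.sqrt (d i)) *
          (Matrix.diagonal fun i => Real.sqrt (d i)) = Matrix.diagonal d := by
        rw [Matrix.diagonal_mul_diagonal]
        have hfun : (fun i => Real.sqrt (d i) * Real.sqrt (d i)) = d :=
          funext fun i => Real.mul_self_sqrt (hd i).le
        rw [hfun]
      calc L * (Matrix.diagonal fun i => Real.sqrt (d i)) *
            ((Matrix.diagonal fun i => Real.sqrt (d i)) * Rᵀ)
          = L * ((Matrix.diagonal fun i => Real.sqrt (d i)) *
            ((Matrix.diagonal fun i => Real.sqrt (d i)) * Rᵀ)) := by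
            simp only [Matrix.mul_assoc]
        _ = L * Matrix.diagonal d * Rᵀ := by
            rw [← Matrix.mul_assoc ((Matrix.diagonal fun i => Real.sqrt (d i)))]
            rw [hdd, Matrix.mul_assoc]
    · have key : ∀ (a : ℕ) (M : Matrix (Fin a) (Fin r) ℝ), Mᵀ * M = 1 →
          ∑ i, ∑ j, (M * Matrix.diagonal fun i => Real.sqrt (d i)) i j ^ 2 = ∑ i, d i := by
        intro a M hM
        rw [frob_eq_trace]
        have : (M * Matrix.diagonal fun i => Real.sqrt (d i))ᵀ *
            (M * Matrix.diagonal fun i => Real.sqrt (d i)) = Matrix.diagonal d := by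
          rw [Matrix.transpose_mul, Matrix.diagonal_transpose]
          calc (Matrix.diagonal fun i => Real.sqrt (d i)) * Mᵀ *
                (M * Matrix.diagonal fun i => Real.sqrt (d i))
              = (Matrix.diagonal fun i => Real.sqrt (d i)) * ((Mᵀ * M) *
                (Matrix.diagonal fun i => Real.sqrt (d i))) := by simp only [Matrix.mul_assoc]
            _ = (Matrix.diagonal fun i => Real.sqrt (d i)) *
                (Matrix.diagonal fun i => Real.sqrt (d i)) := by
                rw [hM]; simp [Matrix.mul_assoc]
            _ = Matrix.diagonal d := by
                rw [Matrix.diagonal_mul_diagonal]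
                have hfun : (fun i => Real.sqrt (d i) * Real.sqrt (d i)) = d :=
                  funext fun i => Real.mul_self_sqrt (hd i).le
                rw [hfun]
        rw [this, Matrix.trace_diagonal]
      rw [key m L hL, key n R hR]
      ring
end

section
/- Let V, H ∈ ℝ^{r×r} satisfy VHᵀ = I. Then the matrix M = (Vᵀ ⊙ Vᵀ + Hᵀ ⊙ Hᵀ)/2, whose (j,i) entry is (v_{ij}² + h_{ij}²)/2, is a superstochastic matrix: it can be written as D + N where D is doubly stochastic and N has nonnegative entries. -/
open Matrix BigOperators

def DoublyStochastic {r : ℕ} (M : Matrix (Fin r) (Fin r) ℝ) : Prop :=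
  (∀ i j, 0 ≤ M i j) ∧ (∀ i, ∑ j, M i j = 1) ∧ (∀ j, ∑ i, M i j = 1)

def SuperStochastic {r : ℕ} (M : Matrix (Fin r) (Fin r) ℝ) : Prop :=
  ∃ D N : Matrix (Fin r) (Fin r) ℝ,
    DoublyStochastic D ∧ (∀ i j, 0 ≤ N i j) ∧ M = D + N

/-!
For `A, B ⊆ Fin r`, the vectors supported on `B` whose image `uᵀV` vanishes off `A` form a space of
dimension at least `|A| + |B| - r`. For a unit vector `u` there, `V Hᵀ = 1` gives
`1 = ⟨uᵀV, uᵀH⟩ ≤ ½ ∑_{j ∈ A} ((uᵀV)_j² + (uᵀH)_j²)`; summing over an orthonormal basis and applying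
Bessel's inequality column by column yields the Hall-type condition `∑_{A × B} M ≥ |A| + |B| - r`.

A nonnegative matrix satisfying this condition dominates a doubly stochastic one: lower its
entries one at a time as far as the condition allows. Afterwards every entry is zero or lies in a
tight block `A × B`. Tight blocks are closed under `(A, B), (A', B') ↦ (A ∪ A', B ∩ B')`, so the
support of a column lies in a single tight block, and comparing that block with the one where the
column is removed shows that the column sums to `1`. Rows follow by transposition.
-/

open Finset Module

theorem Finset.sum_add_sum_le_sum_add_sum {α : Type*} [DecidableEq α] {f : α → ℝ}
    (hf : ∀ x, 0 ≤ f x) {s t s' t' : Finset α} (hunion : s ∪ t ⊆ s' ∪ t')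
    (hinter : s ∩ t ⊆ s' ∩ t') :
    ∑ x ∈ s, f x + ∑ x ∈ t, f x ≤ ∑ x ∈ s', f x + ∑ x ∈ t', f x := by
  rw [← sum_union_inter, ← sum_union_inter (s₁ := s')]
  exact add_le_add (sum_le_sum_of_subset_of_nonneg hunion fun x _ _ => hf x)
    (sum_le_sum_of_subset_of_nonneg hinter fun x _ _ => hf x)

namespace Matrix

section Inverse

variable {ι κ : Type*} [Fintype κ]

theorem dotProduct_self_le_sum_sq_vecMul [Fintype ι] [DecidableEq κ] {V H : Matrix κ ι ℝ}
    (h : V * Hᵀ = 1) {A : Finset ι} {u : κ → ℝ} (hu : ∀ j ∉ A, (u ᵥ* V) j = 0) :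
    u ⬝ᵥ u ≤ ∑ j ∈ A, ((u ᵥ* V) j ^ 2 + (u ᵥ* H) j ^ 2) / 2 := by
  have hdot : u ⬝ᵥ u = ∑ j ∈ A, (u ᵥ* V) j * (u ᵥ* H) j := by
    rw [sum_subset (subset_univ A) fun j _ hj => by rw [hu j hj, zero_mul]]
    change u ⬝ᵥ u = (u ᵥ* V) ⬝ᵥ (u ᵥ* H)
    rw [← mulVec_transpose H, dotProduct_mulVec, vecMul_vecMul, h, vecMul_one]
  rw [hdot]
  gcongr with j
  linarith [two_mul_le_add_sq ((u ᵥ* V) j) ((u ᵥ* H) j)]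

theorem dotProduct_self_eq_one_of_norm_eq_one {u : EuclideanSpace ℝ κ} (hu : ‖u‖ = 1) :
    u.ofLp ⬝ᵥ u.ofLp = 1 := by
  have := EuclideanSpace.norm_sq_eq u
  simp_all [dotProduct, sq]

theorem sum_sq_vecMul_le_of_orthonormal {n : Type*} [Fintype n] {u : n → EuclideanSpace ℝ κ}
    (hu : Orthonormal ℝ u) (V : Matrix κ ι ℝ) (j : ι) :
    ∑ m, ((u m).ofLp ᵥ* V) j ^ 2 ≤ ∑ i, V i j ^ 2 := by
  simpa [EuclideanSpace.norm_sq_eq, EuclideanSpace.inner_eq_star_dotProduct, vecMul, dotProduct,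
    mul_comm] using hu.sum_inner_products_le (WithLp.toLp 2 fun i => V i j) (s := univ)

variable [Fintype ι] [DecidableEq ι]

def vecMulOffLinear (V : Matrix κ ι ℝ) (A : Finset ι) : EuclideanSpace ℝ κ →ₗ[ℝ] (↥Aᶜ → ℝ) :=
  LinearMap.funLeft ℝ ℝ ((↑) : ↥Aᶜ → ι) ∘ₗ V.vecMulLinear ∘ₗ
    (WithLp.linearEquiv 2 ℝ (κ → ℝ)).toLinearMap

theorem mem_ker_vecMulOffLinear {V : Matrix κ ι ℝ} {A : Finset ι} {u : EuclideanSpace ℝ κ} :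
    u ∈ LinearMap.ker (vecMulOffLinear V A) ↔ ∀ j ∉ A, (u.ofLp ᵥ* V) j = 0 := by
  simp [vecMulOffLinear, funext_iff]

theorem card_add_card_sub_card_le_finrank_ker (V : Matrix κ ι ℝ) (A : Finset ι) :
    (A.card : ℝ) + Fintype.card κ - Fintype.card ι ≤
      finrank ℝ (LinearMap.ker (vecMulOffLinear V A)) := by
  have hrank := LinearMap.finrank_range_add_finrank_ker (vecMulOffLinear V A)
  have hrange := Submodule.finrank_le (LinearMap.range (vecMulOffLinear V A))
  simp only [finrank_euclideanSpace, finrank_fintype_fun_eq_card, Fintype.card_coe,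
    card_compl] at hrank hrange
  have hA := A.card_le_univ
  rw [sub_le_iff_le_add]
  exact_mod_cast (by omega : A.card + Fintype.card κ ≤ _ + Fintype.card ι)

theorem card_add_card_sub_card_le_sum_sq [DecidableEq κ] {V H : Matrix κ ι ℝ} (h : V * Hᵀ = 1)
    (A : Finset ι) :
    (A.card : ℝ) + Fintype.card κ - Fintype.card ι ≤ ∑ j ∈ A, ∑ i, (V i j ^ 2 + H i j ^ 2) / 2 := by
  set K := LinearMap.ker (vecMulOffLinear V A)
  let b := stdOrthonormalBasis ℝ K
  let u : Fin (finrank ℝ K) → EuclideanSpace ℝ κ := fun m => b m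
  have hu : Orthonormal ℝ u := K.subtypeₗᵢ.orthonormal_comp_iff.mpr b.orthonormal
  calc (A.card : ℝ) + Fintype.card κ - Fintype.card ι ≤ finrank ℝ K :=
        card_add_card_sub_card_le_finrank_ker V A
    _ = ∑ m, (u m).ofLp ⬝ᵥ (u m).ofLp := by
        simp [dotProduct_self_eq_one_of_norm_eq_one (hu.1 _)]
    _ ≤ ∑ m, ∑ j ∈ A, (((u m).ofLp ᵥ* V) j ^ 2 + ((u m).ofLp ᵥ* H) j ^ 2) / 2 :=
        sum_le_sum fun m _ => dotProduct_self_le_sum_sq_vecMul h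
          (mem_ker_vecMulOffLinear.mp (b m).2)
    _ = ∑ j ∈ A, (∑ m, ((u m).ofLp ᵥ* V) j ^ 2 + ∑ m, ((u m).ofLp ᵥ* H) j ^ 2) / 2 := by
        rw [sum_comm]
        simp only [← sum_div, sum_add_distrib]
    _ ≤ ∑ j ∈ A, (∑ i, V i j ^ 2 + ∑ i, H i j ^ 2) / 2 := by
        gcongr with j
        exacts [sum_sq_vecMul_le_of_orthonormal hu V j, sum_sq_vecMul_le_of_orthonormal hu H j]
    _ = ∑ j ∈ A, ∑ i, (V i j ^ 2 + H i j ^ 2) / 2 := by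
        simp only [← sum_div, sum_add_distrib]

end Inverse

variable {ι : Type*}

def blockSum (M : Matrix ι ι ℝ) (A B : Finset ι) : ℝ :=
  ∑ i ∈ A, ∑ j ∈ B, M i j

theorem blockSum_eq_sum_product (M : Matrix ι ι ℝ) (A B : Finset ι) :
    blockSum M A B = ∑ x ∈ A ×ˢ B, M x.1 x.2 :=
  (sum_product' A B M).symm

theorem blockSum_transpose (M : Matrix ι ι ℝ) (A B : Finset ι) :
    blockSum Mᵀ A B = blockSum M B A :=
  sum_comm

theorem blockSum_mono {M N : Matrix ι ι ℝ} (h : ∀ i j, M i j ≤ N i j) (A B : Finset ι) :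
    blockSum M A B ≤ blockSum N A B :=
  sum_le_sum fun i _ => sum_le_sum fun j _ => h i j

theorem blockSum_union_inter_add_le [DecidableEq ι] {M : Matrix ι ι ℝ} (hM : ∀ i j, 0 ≤ M i j)
    (A A' B B' : Finset ι) :
    blockSum M (A ∪ A') (B ∩ B') + blockSum M (A ∩ A') (B ∪ B') ≤
      blockSum M A B + blockSum M A' B' := by
  simp only [blockSum_eq_sum_product]
  apply sum_add_sum_le_sum_add_sum (f := fun x : ι × ι => M x.1 x.2) (fun x => hM x.1 x.2) <;>
  · intro x
    simp only [mem_union, mem_inter, mem_product]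
    tauto

theorem blockSum_sub_single [DecidableEq ι] (M : Matrix ι ι ℝ) (i j : ι) (c : ℝ)
    (A B : Finset ι) :
    blockSum (M - single i j c) A B = blockSum M A B - if i ∈ A ∧ j ∈ B then c else 0 := by
  simp only [blockSum, sub_apply, sum_sub_distrib, single_apply]
  congr 1
  simp [ite_and, sum_ite_irrel, sum_ite_eq]

variable [Fintype ι]

def HallCondition (M : Matrix ι ι ℝ) : Prop :=
  ∀ A B : Finset ι, (A.card : ℝ) + B.card - Fintype.card ι ≤ blockSum M A B

theorem hallCondition_of_mul_transpose_eq_one [DecidableEq ι] {V H : Matrix ι ι ℝ}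
    (h : V * Hᵀ = 1) :
    HallCondition (of fun j i => (V i j ^ 2 + H i j ^ 2) / 2) := by
  intro A B
  have hB : V.submatrix ((↑) : ↥B → ι) id * (H.submatrix ((↑) : ↥B → ι) id)ᵀ = 1 := by
    rw [transpose_submatrix, ← submatrix_mul _ _ _ _ _ Function.bijective_id, h,
      submatrix_one _ Subtype.val_injective]
  convert card_add_card_sub_card_le_sum_sq hB A using 3
  · rw [Fintype.card_coe]
  · refine sum_congr rfl fun j _ => ?_
    exact (sum_coe_sort B fun i => (V i j ^ 2 + H i j ^ 2) / 2).symm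

def IsTight (M : Matrix ι ι ℝ) (A B : Finset ι) : Prop :=
  blockSum M A B = A.card + B.card - Fintype.card ι

/-- For a nonnegative matrix satisfying `HallCondition`, the entry `M i j` cannot be lowered
without violating it. -/
def IsRigidAt (M : Matrix ι ι ℝ) (i j : ι) : Prop :=
  M i j = 0 ∨ ∃ A B, i ∈ A ∧ j ∈ B ∧ IsTight M A B

theorem HallCondition.transpose {M : Matrix ι ι ℝ} (h : HallCondition M) : HallCondition Mᵀ :=
  fun A B => by rw [blockSum_transpose, add_comm (A.card : ℝ)]; exact h B A

theorem IsRigidAt.transpose {M : Matrix ι ι ℝ} {i j : ι} (h : IsRigidAt M j i) :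
    IsRigidAt Mᵀ i j := by
  obtain h0 | ⟨A, B, hj, hi, hAB⟩ := h
  · exact .inl h0
  · refine .inr ⟨B, A, hi, hj, ?_⟩
    rw [IsTight, blockSum_transpose, hAB, add_comm (A.card : ℝ)]

theorem IsRigidAt.of_le {M N : Matrix ι ι ℝ} (hle : ∀ i j, M i j ≤ N i j) (hM : ∀ i j, 0 ≤ M i j)
    (hH : HallCondition M) {i j : ι} (h : IsRigidAt N i j) : IsRigidAt M i j := by
  obtain h0 | ⟨A, B, hi, hj, hAB⟩ := h
  · exact .inl (le_antisymm (h0 ▸ hle i j) (hM i j))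
  · exact .inr ⟨A, B, hi, hj, le_antisymm ((blockSum_mono hle A B).trans hAB.le) (hH A B)⟩

variable [DecidableEq ι]

theorem IsTight.union_inter {M : Matrix ι ι ℝ} (hM : ∀ i j, 0 ≤ M i j)
    (hH : HallCondition M) {A A' B B' : Finset ι} (h : IsTight M A B) (h' : IsTight M A' B') :
    IsTight M (A ∪ A') (B ∩ B') := by
  have hA : ((A ∪ A').card : ℝ) + (A ∩ A').card = A.card + A'.card := by
    exact_mod_cast card_union_add_card_inter A A'
  have hB : ((B ∪ B').card : ℝ) + (B ∩ B').card = B.card + B'.card := by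
    exact_mod_cast card_union_add_card_inter B B'
  have := blockSum_union_inter_add_le hM A A' B B'
  have := hH (A ∪ A') (B ∩ B')
  have := hH (A ∩ A') (B ∪ B')
  rw [IsTight] at *
  linarith

theorem exists_isTight_superset {M : Matrix ι ι ℝ} (hM : ∀ i j, 0 ≤ M i j) (hH : HallCondition M)
    {j : ι} {S : Finset ι} (hS : S.Nonempty)
    (htight : ∀ i ∈ S, ∃ A B, i ∈ A ∧ j ∈ B ∧ IsTight M A B) :
    ∃ A B, S ⊆ A ∧ j ∈ B ∧ IsTight M A B := by
  induction hS using Nonempty.cons_induction with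
  | singleton i =>
    obtain ⟨A, B, hi, hj, hAB⟩ := htight i (mem_singleton_self i)
    exact ⟨A, B, singleton_subset_iff.mpr hi, hj, hAB⟩
  | cons i S hiS _ ih =>
    obtain ⟨A, B, hi, hj, hAB⟩ := htight i (mem_cons_self i S)
    obtain ⟨A', B', hS, hj', hAB'⟩ := ih fun k hk => htight k (mem_cons_of_mem hk)
    refine ⟨A ∪ A', B ∩ B', ?_, mem_inter.mpr ⟨hj, hj'⟩, hAB.union_inter hM hH hAB'⟩
    rw [cons_eq_insert]
    exact insert_subset (mem_union_left _ hi) (hS.trans subset_union_right)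

theorem sum_apply_eq_one_of_isRigidAt {M : Matrix ι ι ℝ} (hM : ∀ i j, 0 ≤ M i j)
    (hH : HallCondition M) {j : ι} (hrigid : ∀ i, IsRigidAt M i j) : ∑ i, M i j = 1 := by
  have hge : 1 ≤ ∑ i, M i j := by
    simpa [blockSum] using hH univ {j}
  set S := univ.filter fun i => M i j ≠ 0
  have hS : S.Nonempty := nonempty_of_sum_ne_zero (by rw [sum_filter_ne_zero]; linarith)
  obtain ⟨A, B, hSA, hj, hAB⟩ := exists_isTight_superset hM hH hS fun i hi =>
    (hrigid i).resolve_left (mem_filter.mp hi).2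
  have hcol : ∑ i, M i j = ∑ i ∈ A, M i j := by
    refine (sum_subset (subset_univ A) fun i _ hi => ?_).symm
    by_contra h
    exact hi (hSA (by simpa [S] using h))
  have hsplit : blockSum M A B = blockSum M A (B.erase j) + ∑ i ∈ A, M i j := by
    simp only [blockSum, ← sum_add_distrib, sum_erase_add B _ hj]
  have hcard : ((B.erase j).card : ℝ) = B.card - 1 := by
    rw [card_erase_of_mem hj, Nat.cast_sub (one_le_card.mpr ⟨j, hj⟩), Nat.cast_one]
  have := hH A (B.erase j)
  rw [IsTight] at hAB
  linarith

theorem exists_le_isRigidAt {M : Matrix ι ι ℝ} (hM : ∀ i j, 0 ≤ M i j) (hH : HallCondition M)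
    (i j : ι) :
    ∃ N : Matrix ι ι ℝ, (∀ a b, N a b ≤ M a b) ∧ (∀ a b, 0 ≤ N a b) ∧ HallCondition N ∧
      IsRigidAt N i j := by
  let slack (p : Finset ι × Finset ι) : ℝ :=
    blockSum M p.1 p.2 - (p.1.card + p.2.card - Fintype.card ι)
  obtain ⟨p, hp, hmin⟩ := exists_min_image
    (univ.filter fun p : Finset ι × Finset ι => i ∈ p.1 ∧ j ∈ p.2) slack ⟨(univ, univ), by simp⟩
  -- lower `M i j` by as much as the Hall condition and nonnegativity allow
  set δ := min (M i j) (slack p)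
  have hδ : 0 ≤ δ := le_min (hM i j) (sub_nonneg.mpr (hH _ _))
  have hδle : ∀ A B, i ∈ A → j ∈ B → δ ≤ slack (A, B) := fun A B hi hj =>
    (min_le_right _ _).trans (hmin (A, B) (by simp [hi, hj]))
  refine ⟨M - single i j δ, fun a b => ?_, fun a b => ?_, fun A B => ?_, ?_⟩
  · simp only [sub_apply, single_apply]
    split_ifs <;> linarith
  · simp only [sub_apply, single_apply]
    split_ifs with h
    · obtain ⟨rfl, rfl⟩ := h
      linarith [min_le_left (M i j) (slack p)]
    · simpa using hM a b
  · rw [blockSum_sub_single]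
    split_ifs with h
    · linarith [hδle A B h.1 h.2]
    · simpa using hH A B
  · rcases min_choice (M i j) (slack p) with h | h
    · left
      simp [δ, h]
    · right
      obtain ⟨hi, hj⟩ := (mem_filter.mp hp).2
      refine ⟨p.1, p.2, hi, hj, ?_⟩
      rw [IsTight, blockSum_sub_single, if_pos ⟨hi, hj⟩]
      linarith

theorem exists_le_forall_isRigidAt {M : Matrix ι ι ℝ} (hM : ∀ i j, 0 ≤ M i j)
    (hH : HallCondition M) (S : Finset (ι × ι)) :
    ∃ N : Matrix ι ι ℝ, (∀ a b, N a b ≤ M a b) ∧ (∀ a b, 0 ≤ N a b) ∧ HallCondition N ∧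
      ∀ x ∈ S, IsRigidAt N x.1 x.2 := by
  induction S using Finset.induction_on with
  | empty => exact ⟨M, fun _ _ => le_rfl, hM, hH, by simp⟩
  | insert x S _ ih =>
    obtain ⟨N, hNM, hN, hNH, hS⟩ := ih
    obtain ⟨N', hN'N, hN', hN'H, hx⟩ := exists_le_isRigidAt hN hNH x.1 x.2
    refine ⟨N', fun a b => (hN'N a b).trans (hNM a b), hN', hN'H, ?_⟩
    rintro y hy
    obtain rfl | hy := mem_insert.mp hy
    exacts [hx, (hS y hy).of_le hN'N hN' hN'H]

theorem exists_mem_doublyStochastic_le {M : Matrix ι ι ℝ} (hM : ∀ i j, 0 ≤ M i j)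
    (hH : HallCondition M) : ∃ D ∈ doublyStochastic ℝ ι, ∀ i j, D i j ≤ M i j := by
  obtain ⟨D, hDM, hD, hDH, hrigid⟩ := exists_le_forall_isRigidAt hM hH univ
  refine ⟨D, mem_doublyStochastic_iff_sum.mpr ⟨hD, fun i => ?_, fun j => ?_⟩, hDM⟩
  · exact sum_apply_eq_one_of_isRigidAt (M := Dᵀ) (fun a b => hD b a) hDH.transpose
      fun j => (hrigid (i, j) (mem_univ _)).transpose
  · exact sum_apply_eq_one_of_isRigidAt hD hDH fun i => hrigid (i, j) (mem_univ _)

end Matrix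

/-- If V Hᵀ = I then the matrix with (j,i) entry (v_{ij}² + h_{ij}²)/2 is
superstochastic. -/
theorem superstochastic_of_inverse {r : ℕ} (V H : Matrix (Fin r) (Fin r) ℝ)
    (h : V * Hᵀ = 1) :
    SuperStochastic (Matrix.of fun j i => (V i j ^ 2 + H i j ^ 2) / 2) := by
  set M : Matrix (Fin r) (Fin r) ℝ := of fun j i => (V i j ^ 2 + H i j ^ 2) / 2
  have hM : ∀ j i, 0 ≤ M j i := fun j i => by simp only [M, of_apply]; positivity
  obtain ⟨D, hD, hDM⟩ :=
    exists_mem_doublyStochastic_le hM (hallCondition_of_mul_transpose_eq_one h)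
  exact ⟨D, M - D, mem_doublyStochastic_iff_sum.mp hD, fun i j => sub_nonneg.mpr (hDM i j),
    (add_sub_cancel D M).symm⟩
end

section
/- The extreme points of the set S_W of r × r superstochastic matrices are exactly the r × r permutation matrices. -/
open Matrix BigOperators

def IsPermMatrix {r : ℕ} (M : Matrix (Fin r) (Fin r) ℝ) : Prop :=
  ∃ e : Equiv.Perm (Fin r), ∀ i j, M i j = if e i = j then 1 else 0

lemma ds_mem_super {r : ℕ} {D : Matrix (Fin r) (Fin r) ℝ} (hD : DoublyStochastic D) :
    SuperStochastic D :=
  ⟨D, 0, hD, fun _ _ => le_refl 0, (add_zero D).symm⟩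

lemma ds_total_sum {r : ℕ} {D : Matrix (Fin r) (Fin r) ℝ} (hD : DoublyStochastic D) :
    ∑ i, ∑ j, D i j = r := by
  simp [hD.2.1]

lemma nonneg_total_sum_zero {r : ℕ} {N : Matrix (Fin r) (Fin r) ℝ}
    (hN : ∀ i j, 0 ≤ N i j) (h : ∑ i, ∑ j, N i j = 0) : N = 0 := by
  ext i j
  have h1 : ∀ i ∈ Finset.univ, (0:ℝ) ≤ ∑ j, N i j :=
    fun i _ => Finset.sum_nonneg fun j _ => hN i j
  have h2 := (Finset.sum_eq_zero_iff_of_nonneg h1).1 h i (Finset.mem_univ i)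
  have h3 := (Finset.sum_eq_zero_iff_of_nonneg (fun j _ => hN i j)).1 h2 j (Finset.mem_univ j)
  simpa using h3

lemma perm_ds {r : ℕ} {P : Matrix (Fin r) (Fin r) ℝ} (e : Equiv.Perm (Fin r))
    (hP : ∀ i j, P i j = if e i = j then 1 else 0) : DoublyStochastic P := by
  refine ⟨fun i j => ?_, fun i => ?_, fun j => ?_⟩
  · rw [hP]; positivity
  · simp [hP]
  · simp_rw [hP, Equiv.apply_eq_iff_eq_symm_apply]
    simp

/-- The extreme points of the set of r × r superstochastic matrices are exactly
the permutation matrices. -/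
theorem extremePoints_superStochastic (r : ℕ) :
    Set.extremePoints ℝ {M : Matrix (Fin r) (Fin r) ℝ | SuperStochastic M} =
      {M : Matrix (Fin r) (Fin r) ℝ | IsPermMatrix M} := by
  ext M
  simp only [Set.mem_setOf_eq]
  rw [mem_extremePoints]
  constructor
  · rintro ⟨⟨D, N, hD, hN, hMDN⟩, hext⟩
    -- N must be zero
    have hD2N : SuperStochastic (D + (2:ℝ) • N) := by
      refine ⟨D, (2:ℝ) • N, hD, fun i j => ?_, rfl⟩
      have := hN i j
      simp only [Matrix.smul_apply, smul_eq_mul]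
      linarith
    have hseg : M ∈ openSegment ℝ D (D + (2:ℝ) • N) :=
      ⟨1/2, 1/2, by norm_num, by norm_num, by norm_num, by rw [hMDN]; module⟩
    obtain ⟨h1, h2⟩ := hext D (Set.mem_setOf_eq ▸ ds_mem_super hD) (D + (2:ℝ) • N) hD2N hseg
    have hN0 : N = 0 := by
      have : D + (2:ℝ) • N = D := h2.trans h1.symm
      have h3 : (2:ℝ) • N = 0 := by
        have := congrArg (fun X => X - D) this
        simpa [add_sub_cancel_left] using this
      rcases smul_eq_zero.1 h3 with h | h
      · norm_num at h
      · exact h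
    have hMD : M = D := by rw [hMDN, hN0, add_zero]
    -- M is doubly stochastic, hence extreme in the doubly stochastic set
    have hMds : M ∈ doublyStochastic ℝ (Fin r) := by
      rw [mem_doublyStochastic_iff_sum]
      rw [hMD]
      exact hD
    have hext2 : M ∈ Set.extremePoints ℝ (doublyStochastic ℝ (Fin r) : Set _) := by
      rw [mem_extremePoints]
      refine ⟨hMds, fun A hA B hB hs => ?_⟩
      exact hext A (ds_mem_super (mem_doublyStochastic_iff_sum.1 hA))
        B (ds_mem_super (mem_doublyStochastic_iff_sum.1 hB)) hs
    rw [doublyStochastic_eq_convexHull_permMatrix] at hext2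
    have := extremePoints_convexHull_subset hext2
    obtain ⟨σ, hσ⟩ := this
    refine ⟨σ, fun i j => ?_⟩
    rw [← hσ]
    simp [Equiv.Perm.permMatrix, PEquiv.toMatrix_apply, Equiv.toPEquiv_apply, eq_comm]
  · rintro ⟨e, hP⟩
    have hPds : DoublyStochastic M := perm_ds e hP
    refine ⟨ds_mem_super hPds, ?_⟩
    rintro A ⟨DA, NA, hDA, hNA, rfl⟩ B ⟨DB, NB, hDB, hNB, rfl⟩ ⟨a, b, ha, hb, hab, hR⟩
    set A := DA + NA with hAdef
    set B := DB + NB with hBdef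
    -- total sums
    have hsumP : ∑ i, ∑ j, M i j = r := ds_total_sum hPds
    have hsumA : ∑ i, ∑ j, A i j = r + ∑ i, ∑ j, NA i j := by
      simp [hAdef, Matrix.add_apply, Finset.sum_add_distrib, ds_total_sum hDA]
    have hsumB : ∑ i, ∑ j, B i j = r + ∑ i, ∑ j, NB i j := by
      simp [hBdef, Matrix.add_apply, Finset.sum_add_distrib, ds_total_sum hDB]
    have hRsum : a * (∑ i, ∑ j, A i j) + b * (∑ i, ∑ j, B i j) = ∑ i, ∑ j, M i j := by
      rw [← hR]
      simp [Matrix.add_apply, Matrix.smul_apply, Finset.sum_add_distrib, Finset.mul_sum,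
        smul_eq_mul]
    have hSA : 0 ≤ ∑ i, ∑ j, NA i j :=
      Finset.sum_nonneg fun i _ => Finset.sum_nonneg fun j _ => hNA i j
    have hSB : 0 ≤ ∑ i, ∑ j, NB i j :=
      Finset.sum_nonneg fun i _ => Finset.sum_nonneg fun j _ => hNB i j
    have hNA0 : NA = 0 := by
      apply nonneg_total_sum_zero hNA
      nlinarith [mul_nonneg ha.le hSA, mul_nonneg hb.le hSB]
    have hNB0 : NB = 0 := by
      apply nonneg_total_sum_zero hNB
      nlinarith [mul_nonneg ha.le hSA, mul_nonneg hb.le hSB]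
    have hAds : DoublyStochastic A := by rw [hAdef, hNA0, add_zero]; exact hDA
    have hBds : DoublyStochastic B := by rw [hBdef, hNB0, add_zero]; exact hDB
    -- entrywise
    have hPij : ∀ i j, a * A i j + b * B i j = M i j := by
      intro i j
      rw [← hR]
      simp [Matrix.add_apply, Matrix.smul_apply, smul_eq_mul]
    have hAzero : ∀ i j, e i ≠ j → A i j = 0 := by
      intro i j hij
      have h0 : a * A i j + b * B i j = 0 := by rw [hPij, hP, if_neg hij]
      have h1 := mul_nonneg ha.le (hAds.1 i j)
      have h2 := mul_nonneg hb.le (hBds.1 i j)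
      have h3 : a * A i j = 0 := by linarith
      rcases mul_eq_zero.1 h3 with h | h
      · exact absurd h (ne_of_gt ha)
      · exact h
    have hAP : A = M := by
      ext i j
      by_cases h : e i = j
      · subst h
        have : ∑ j, A i j = A i (e i) :=
          Finset.sum_eq_single (e i) (fun c _ hc => hAzero i c (fun h => hc h.symm))
            (by simp)
        rw [← this, hAds.2.1, hP, if_pos rfl]
      · rw [hAzero i j h, hP, if_neg h]
    have hBP : B = M := by
      have h2 : a • M + b • B = M := by rw [← hAP] at hR ⊢; exact hR
      have h3 : b • B = M - a • M := eq_sub_of_add_eq' h2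
      have hb' : b • B = b • M := by
        rw [h3, show b = 1 - a by linarith]
        module
      exact smul_right_injective _ (ne_of_gt hb) hb'
    exact ⟨hAP, hBP⟩
end

section
/- Every permutation matrix Π satisfies Π = (Π ⊙ Π + Π ⊙ Π)/2 with ΠΠᵀ = I; consequently, every extreme point of the set of superstochastic matrices lies in the set S = {(Vᵀ⊙Vᵀ + Hᵀ⊙Hᵀ)/2 : VHᵀ = I}. -/
open Matrix BigOperators

/-! Both claims reduce to permutation matrices being 0/1-valued and orthogonal: an extreme point
`D + N` of the superstochastic matrices is the midpoint of `D` and `D + 2N`, so `N = 0`; it is then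
an extreme point of the Birkhoff polytope, i.e. a permutation matrix `P`, and `V = H = Pᵀ` puts it
in `S`. -/

section PermMatrix

variable {r : ℕ}

lemma isPermMatrix_permMatrix (σ : Equiv.Perm (Fin r)) : IsPermMatrix (σ.permMatrix ℝ) :=
  ⟨σ, fun i j => by simp [PEquiv.toMatrix_apply, Equiv.toPEquiv_apply, eq_comm]⟩

lemma IsPermMatrix.exists_eq_permMatrix {P : Matrix (Fin r) (Fin r) ℝ} (hP : IsPermMatrix P) :
    ∃ σ : Equiv.Perm (Fin r), P = σ.permMatrix ℝ := by
  obtain ⟨σ, hσ⟩ := hP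
  exact ⟨σ, ext fun i j => by simp [hσ, PEquiv.toMatrix_apply, Equiv.toPEquiv_apply, eq_comm]⟩

lemma IsPermMatrix.hadamard_self {P : Matrix (Fin r) (Fin r) ℝ} (hP : IsPermMatrix P) :
    P ⊙ P = P := by
  obtain ⟨σ, hσ⟩ := hP
  ext i j
  rw [hadamard_apply, hσ]
  split_ifs <;> norm_num

lemma IsPermMatrix.eq_half_smul_hadamard {P : Matrix (Fin r) (Fin r) ℝ} (hP : IsPermMatrix P) :
    P = (1 / 2 : ℝ) • (P ⊙ P + P ⊙ P) := by
  rw [hP.hadamard_self, ← two_smul ℝ P, smul_smul]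
  norm_num

lemma IsPermMatrix.mul_transpose_self {P : Matrix (Fin r) (Fin r) ℝ} (hP : IsPermMatrix P) :
    P * Pᵀ = 1 := by
  obtain ⟨σ, rfl⟩ := hP.exists_eq_permMatrix
  rw [transpose_permMatrix, ← permMatrix_mul, inv_mul_cancel, permMatrix_one]

end PermMatrix

section SuperStochastic

variable {r : ℕ}

lemma doublyStochastic_iff_mem_doublyStochastic {D : Matrix (Fin r) (Fin r) ℝ} :
    DoublyStochastic D ↔ D ∈ doublyStochastic ℝ (Fin r) :=
  mem_doublyStochastic_iff_sum.symm

lemma DoublyStochastic.superStochastic {D : Matrix (Fin r) (Fin r) ℝ} (hD : DoublyStochastic D) :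
    SuperStochastic D :=
  ⟨D, 0, hD, fun _ _ => le_rfl, (add_zero D).symm⟩

lemma mem_doublyStochastic_of_mem_extremePoints_superStochastic {E : Matrix (Fin r) (Fin r) ℝ}
    (hE : E ∈ Set.extremePoints ℝ {M | SuperStochastic M}) : E ∈ doublyStochastic ℝ (Fin r) := by
  obtain ⟨⟨D, N, hD, hN, rfl⟩, hext⟩ := hE
  have hD2N_super : SuperStochastic (D + (2 : ℝ) • N) :=
    ⟨D, (2 : ℝ) • N, hD, fun i j => mul_nonneg zero_le_two (hN i j), rfl⟩
  have hmid : D + N ∈ openSegment ℝ D (D + (2 : ℝ) • N) :=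
    ⟨1 / 2, 1 / 2, by norm_num, by norm_num, by norm_num, by module⟩
  rw [← hext hD.superStochastic hD2N_super hmid]
  exact doublyStochastic_iff_mem_doublyStochastic.1 hD

lemma extremePoints_superStochastic_subset :
    Set.extremePoints ℝ {M : Matrix (Fin r) (Fin r) ℝ | SuperStochastic M} ⊆
      {σ.permMatrix ℝ | σ : Equiv.Perm (Fin r)} := by
  intro E hE
  rw [← extremePoints_doublyStochastic]
  exact inter_extremePoints_subset_extremePoints_of_subset
    (fun _ hD => (doublyStochastic_iff_mem_doublyStochastic.2 hD).superStochastic)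
    ⟨mem_doublyStochastic_of_mem_extremePoints_superStochastic hE, hE⟩

end SuperStochastic

/-- Every permutation matrix Π satisfies Π = (Π⊙Π + Π⊙Π)/2 and Π Πᵀ = I; hence
every extreme point of the set of superstochastic matrices lies in the set
S = {(Vᵀ⊙Vᵀ + Hᵀ⊙Hᵀ)/2 : V Hᵀ = I}. -/
theorem permMatrix_in_S_and_extremePoints_subset (r : ℕ) :
    (∀ P : Matrix (Fin r) (Fin r) ℝ, IsPermMatrix P →
        P = (1 / 2 : ℝ) • (Matrix.hadamard P P + Matrix.hadamard P P) ∧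
        P * Pᵀ = 1) ∧
    Set.extremePoints ℝ {M : Matrix (Fin r) (Fin r) ℝ | SuperStochastic M} ⊆
      {M : Matrix (Fin r) (Fin r) ℝ | ∃ V H : Matrix (Fin r) (Fin r) ℝ,
        V * Hᵀ = 1 ∧
        M = (1 / 2 : ℝ) • (Matrix.hadamard Vᵀ Vᵀ + Matrix.hadamard Hᵀ Hᵀ)} := by
  refine ⟨fun P hP => ⟨hP.eq_half_smul_hadamard, hP.mul_transpose_self⟩, ?_⟩
  rintro _ hE
  obtain ⟨σ, rfl⟩ := extremePoints_superStochastic_subset hE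
  have hP := isPermMatrix_permMatrix σ
  refine ⟨(σ.permMatrix ℝ)ᵀ, (σ.permMatrix ℝ)ᵀ, ?_, ?_⟩
  · rw [transpose_transpose]
    exact mul_eq_one_comm.1 hP.mul_transpose_self
  · rw [transpose_transpose]
    exact hP.eq_half_smul_hadamard
end

section
/- Let σ ∈ ℝ^r have nonnegative entries and let f : ℝ^r_{≥0} → ℝ be quasi-concave, lower semi-continuous, and non-decreasing in each coordinate (γ̃ᵢ ≥ γᵢ for all i implies f(γ̃) ≥ f(γ)). Then the infimum of f(Mσ) over M superstochastic equals the infimum of f(Mσ) over M doubly stochastic, and is attained at a permutation matrix; i.e., there is an optimizer of the form γ* = Πσ with Π a permutation matrix. -/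
open Matrix BigOperators

def permMat {r : ℕ} (e : Equiv.Perm (Fin r)) : Matrix (Fin r) (Fin r) ℝ :=
  Matrix.of fun i j => if e i = j then 1 else 0

lemma permMat_eq {r : ℕ} (e : Equiv.Perm (Fin r)) : permMat e = e.permMatrix ℝ := by
  ext i j
  simp [permMat, Equiv.Perm.permMatrix, PEquiv.toMatrix, Equiv.toPEquiv, eq_comm]

lemma permMat_mulVec {r : ℕ} (e : Equiv.Perm (Fin r)) (σ : Fin r → ℝ) (i : Fin r) :
    (permMat e).mulVec σ i = σ (e i) := by
  simp [permMat, mulVec, dotProduct]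

lemma permMat_ds {r : ℕ} (e : Equiv.Perm (Fin r)) : DoublyStochastic (permMat e) := by
  have h : permMat e ∈ doublyStochastic ℝ (Fin r) := by
    rw [permMat_eq]; exact permMatrix_mem_doublyStochastic
  rw [mem_doublyStochastic_iff_sum] at h
  exact h

/-- For nonnegative σ and f quasi-concave, lower semi-continuous and
coordinatewise non-decreasing, the infimum of f(Mσ) over superstochastic M
equals the infimum over doubly stochastic M, and is attained at a permutation
matrix. -/
theorem min_over_superstochastic_at_perm {r : ℕ} (σ : Fin r → ℝ)
    (hσ : ∀ i, 0 ≤ σ i) (f : (Fin r → ℝ) → ℝ)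
    (hqc : ∀ α : ℝ, Convex ℝ {x : Fin r → ℝ | (∀ i, 0 ≤ x i) ∧ α ≤ f x})
    (hlsc : LowerSemicontinuous f)
    (hmono : ∀ x y : Fin r → ℝ, (∀ i, x i ≤ y i) → f x ≤ f y) :
    sInf {y : ℝ | ∃ M, SuperStochastic M ∧ y = f (M.mulVec σ)} =
      sInf {y : ℝ | ∃ M, DoublyStochastic M ∧ y = f (M.mulVec σ)} ∧
    ∃ e : Equiv.Perm (Fin r), ∀ M, SuperStochastic M →
      f ((permMat e).mulVec σ) ≤ f (M.mulVec σ) := by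
  classical
  -- choose minimizing permutation
  obtain ⟨e, -, he⟩ := Finset.exists_min_image (Finset.univ : Finset (Equiv.Perm (Fin r)))
    (fun π => f ((permMat π).mulVec σ)) ⟨1, Finset.mem_univ 1⟩
  set α := f ((permMat e).mulVec σ) with hα
  -- key: α lower-bounds over doubly stochastic
  have keyD : ∀ M, DoublyStochastic M → α ≤ f (M.mulVec σ) := by
    intro M hM
    have hM' : M ∈ doublyStochastic ℝ (Fin r) := mem_doublyStochastic_iff_sum.2 hM
    obtain ⟨w, hw0, hw1, hwM⟩ := exists_eq_sum_perm_of_mem_doublyStochastic hM'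
    have hmv : M.mulVec σ = ∑ π : Equiv.Perm (Fin r), w π • ((permMat π).mulVec σ) := by
      rw [← hwM]
      ext i
      simp only [Finset.sum_apply, Pi.smul_apply, permMat_eq, mulVec, dotProduct,
        Matrix.sum_apply, Matrix.smul_apply, smul_eq_mul, Finset.sum_mul, Finset.mul_sum]
      rw [Finset.sum_comm]
      simp [mul_assoc]
    have hmem : (∑ π : Equiv.Perm (Fin r), w π • ((permMat π).mulVec σ)) ∈
        {x : Fin r → ℝ | (∀ i, 0 ≤ x i) ∧ α ≤ f x} := by
      refine Convex.sum_mem (hqc α) (fun π _ => hw0 π) hw1 ?_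
      intro π _
      refine ⟨fun i => ?_, he π (Finset.mem_univ π)⟩
      rw [permMat_mulVec]; exact hσ _
    rw [hmv]
    exact hmem.2
  -- key: α lower-bounds over superstochastic
  have keyS : ∀ M, SuperStochastic M → α ≤ f (M.mulVec σ) := by
    rintro M ⟨D, N, hD, hN, rfl⟩
    refine (keyD D hD).trans (hmono _ _ fun i => ?_)
    rw [add_mulVec]
    have : 0 ≤ N.mulVec σ i := by
      simp only [mulVec, dotProduct]
      exact Finset.sum_nonneg fun j _ => mul_nonneg (hN i j) (hσ j)
    simp only [Pi.add_apply]
    linarith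
  have hSS : SuperStochastic (permMat e) :=
    ⟨permMat e, 0, permMat_ds e, fun i j => le_refl 0, by simp⟩
  have hLs : IsLeast {y : ℝ | ∃ M, SuperStochastic M ∧ y = f (M.mulVec σ)} α := by
    constructor
    · exact ⟨permMat e, hSS, rfl⟩
    · rintro y ⟨M, hM, rfl⟩; exact keyS M hM
  have hLd : IsLeast {y : ℝ | ∃ M, DoublyStochastic M ∧ y = f (M.mulVec σ)} α := by
    constructor
    · exact ⟨permMat e, permMat_ds e, rfl⟩
    · rintro y ⟨M, hM, rfl⟩; exact keyD M hM
  exact ⟨by rw [hLs.csInf_eq, hLd.csInf_eq], e, fun M hM => keyS M hM⟩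
end

section
/- Let X ∈ ℝ^{m×n} have rank r with singular values σ₁ ≥ … ≥ σ_r > 0, and let a₁ ≤ a₂ ≤ … ≤ a_p be nonnegative weights with p ≥ r. Then for all factorizations X = BCᵀ with B ∈ ℝ^{m×p}, C ∈ ℝ^{n×p}, the inequality Σᵢ aᵢ(‖Bᵢ‖² + ‖Cᵢ‖²)/2 ≥ Σᵢ₌₁^r aᵢσᵢ(X) holds, where Bᵢ, Cᵢ denote the i-th columns, and equality is attained by B = L√Σ, C = R√Σ (padded with zero columns), where X = LΣRᵀ is the compact SVD. That is, min over factorizations of Σᵢ aᵢ(‖Bᵢ‖²+‖Cᵢ‖²)/2 equals the weighted nuclear norm Σᵢ aᵢσᵢ(X). -/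
/-!
Write `tⱼ = (‖Bⱼ‖² + ‖Cⱼ‖²) / 2` and pad `d` with zeros to length `p`. Since the weights are
non-decreasing and nonnegative, Abel summation reduces the inequality to the tail bounds
`∑_{i ≥ k} dᵢ ≤ ∑_{j ≥ k} tⱼ`. For such a tail choose `Q` with `r - k` orthonormal columns
orthogonal to `Lᵀ Bⱼ` for all `j < k`, and put `U = L Q`, `V = R Q`. Then
`tr (Qᵀ diag(d) Q) = ∑ⱼ ⟪Uᵀ Bⱼ, Vᵀ Cⱼ⟫`, where the terms `j < k` vanish and the others are at
most `tⱼ` by AM-GM and Bessel's inequality. On the other side `tr (Qᵀ diag(d) Q) = ∑ᵢ dᵢ qᵢ`, where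
the squared row norms `qᵢ` of `Q` lie in `[0, 1]` and sum to `r - k`, so it is at least the sum
of the `r - k` smallest `dᵢ`. The balanced factorization attains equality because the squared
norms of its `i`-th columns are both `dᵢ`.
-/

open Matrix Finset

theorem Finset.sum_mul_le_sum_mul_of_tail_sum_le {ι R : Type*} [LinearOrder ι] [CommRing R]
    [LinearOrder R] [IsStrictOrderedRing R] (s : Finset ι) {a x y : ι → R}
    (ha : MonotoneOn a s) (ha0 : ∀ i ∈ s, 0 ≤ a i)
    (hxy : ∀ k ∈ s, ∑ i ∈ s with k ≤ i, x i ≤ ∑ i ∈ s with k ≤ i, y i) :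
    ∑ i ∈ s, a i * x i ≤ ∑ i ∈ s, a i * y i := by
  classical
  induction s using Finset.induction_on_min generalizing a with
  | empty => simp
  | insert m s hm ih =>
    have hms : m ∉ s := fun h => lt_irrefl m (hm m h)
    have hall : ∑ i ∈ insert m s, x i ≤ ∑ i ∈ insert m s, y i := by
      have hm_le : ∀ i ∈ insert m s, m ≤ i := fun i hi =>
        (mem_insert.1 hi).elim (fun h => h.ge) fun h => (hm i h).le
      simpa only [filter_true_of_mem hm_le] using hxy m (mem_insert_self m s)
    have htail : ∀ k ∈ s, {i ∈ insert m s | k ≤ i} = {i ∈ s | k ≤ i} := fun k hk => by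
      rw [filter_insert, if_neg (hm k hk).not_ge]
    have hrest : ∑ i ∈ s, (a i - a m) * x i ≤ ∑ i ∈ s, (a i - a m) * y i :=
      ih (fun i hi j hj hij =>
          sub_le_sub_right (ha (mem_insert_of_mem hi) (mem_insert_of_mem hj) hij) _)
        (fun i hi => sub_nonneg.2 (ha (mem_insert_self m s) (mem_insert_of_mem hi) (hm i hi).le))
        (fun k hk => htail k hk ▸ hxy k (mem_insert_of_mem hk))
    have hsplit : ∀ z : ι → R, ∑ i ∈ insert m s, a i * z i =
        a m * ∑ i ∈ insert m s, z i + ∑ i ∈ s, (a i - a m) * z i := fun z => by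
      simp only [sum_insert hms, mul_add, sub_mul, sum_sub_distrib, mul_sum]
      ring
    rw [hsplit x, hsplit y]
    exact add_le_add (mul_le_mul_of_nonneg_left hall (ha0 m (mem_insert_self m s))) hrest

theorem Finset.sum_le_sum_mul_of_le_threshold {ι R : Type*} [Fintype ι] [CommRing R]
    [LinearOrder R] [IsStrictOrderedRing R] (s : Finset ι) {d q : ι → R} {τ : R}
    (hs : ∀ i ∈ s, d i ≤ τ) (hsc : ∀ i ∉ s, τ ≤ d i) (hq0 : ∀ i, 0 ≤ q i) (hq1 : ∀ i, q i ≤ 1)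
    (hq : ∑ i, q i = #s) :
    ∑ i ∈ s, d i ≤ ∑ i, d i * q i := by
  classical
  have hin : ∑ i ∈ s, d i ≤ ∑ i ∈ s, (d i * q i + τ * (1 - q i)) :=
    sum_le_sum fun i hi => by
      nlinarith [mul_le_mul_of_nonneg_right (hs i hi) (sub_nonneg.2 (hq1 i))]
  have hout : ∑ i ∈ sᶜ, τ * q i ≤ ∑ i ∈ sᶜ, d i * q i :=
    sum_le_sum fun i hi => mul_le_mul_of_nonneg_right (hsc i (mem_compl.1 hi)) (hq0 i)
  have hbalance : ∑ i ∈ s, τ * (1 - q i) = ∑ i ∈ sᶜ, τ * q i := by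
    rw [← mul_sum, ← mul_sum, sum_sub_distrib, sum_const, nsmul_one, ← hq,
      ← sum_add_sum_compl s q, add_sub_cancel_left]
  rw [sum_add_distrib, hbalance] at hin
  rw [← sum_add_sum_compl s (fun i => d i * q i)]
  linarith

namespace Matrix

variable {μ ι : Type*} [Fintype μ]

theorem dotProduct_le_add_div_two (u v : μ → ℝ) : u ⬝ᵥ v ≤ (u ⬝ᵥ u + v ⬝ᵥ v) / 2 := by
  have h := dotProduct_star_self_nonneg (u - v)
  simp only [star_trivial, sub_dotProduct, dotProduct_sub, dotProduct_comm v u] at h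
  linarith

theorem sum_sq_col_eq_one [DecidableEq ι] {α : Type*} [Semiring α] {L : Matrix μ ι α}
    (hL : Lᵀ * L = 1) (i : ι) : ∑ x, L x i ^ 2 = 1 := by
  simpa [mul_apply, sq] using congrFun (congrFun hL i) i

variable [Fintype ι]

theorem trace_transpose_mul_diagonal_mul [DecidableEq μ] {α : Type*} [CommSemiring α]
    (Q : Matrix μ ι α) (d : μ → α) : trace (Qᵀ * diagonal d * Q) = ∑ i, d i * (Q i ⬝ᵥ Q i) := by
  simp only [trace, Matrix.diag, mul_apply, diagonal_apply, mul_ite, mul_zero, sum_ite_eq',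
    mem_univ, if_true, transpose_apply, dotProduct, mul_sum]
  rw [sum_comm]
  exact sum_congr rfl fun i _ => sum_congr rfl fun s _ => by ring

theorem dotProduct_transpose_mulVec_self_le [DecidableEq ι] {U : Matrix μ ι ℝ}
    (hU : Uᵀ * U = 1) (b : μ → ℝ) : (Uᵀ *ᵥ b) ⬝ᵥ (Uᵀ *ᵥ b) ≤ b ⬝ᵥ b := by
  set y := Uᵀ *ᵥ b
  have hcross : (U *ᵥ y) ⬝ᵥ b = y ⬝ᵥ y := by
    rw [dotProduct_comm, dotProduct_mulVec, ← mulVec_transpose, dotProduct_comm]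
  have hnorm : (U *ᵥ y) ⬝ᵥ (U *ᵥ y) = y ⬝ᵥ y := by
    rw [dotProduct_mulVec, ← mulVec_transpose, mulVec_mulVec, hU, one_mulVec]
  have h := dotProduct_star_self_nonneg (b - U *ᵥ y)
  simp only [star_trivial, sub_dotProduct, dotProduct_sub, dotProduct_comm b (U *ᵥ y), hcross,
    hnorm] at h
  linarith

theorem dotProduct_row_self_le_one [DecidableEq μ] [DecidableEq ι] {Q : Matrix μ ι ℝ}
    (hQ : Qᵀ * Q = 1) (i : μ) : Q i ⬝ᵥ Q i ≤ 1 := by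
  have h := dotProduct_transpose_mulVec_self_le hQ (Pi.single i 1)
  rwa [mulVec_single_one, col_transpose, single_dotProduct, one_mul, Pi.single_eq_same] at h

theorem exists_transpose_mul_self_eq_one_mul_eq_zero [DecidableEq ι] {κ : Type*} [Fintype κ]
    (W : Matrix κ ι ℝ) {s : ℕ} (hs : s + Fintype.card κ ≤ Fintype.card ι) :
    ∃ Q : Matrix ι (Fin s) ℝ, Qᵀ * Q = 1 ∧ W * Q = 0 := by
  let K := LinearMap.ker (toLpLin 2 2 W)
  have hK : s ≤ Module.finrank ℝ K := by
    have h1 : Module.finrank ℝ (LinearMap.range (toLpLin 2 2 W)) + Module.finrank ℝ K =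
        Fintype.card ι := by
      simpa using LinearMap.finrank_range_add_finrank_ker (toLpLin 2 2 W)
    have h2 := Submodule.finrank_le (LinearMap.range (toLpLin 2 2 W))
    rw [finrank_euclideanSpace] at h2
    omega
  let q : Fin s → EuclideanSpace ℝ ι := fun j => stdOrthonormalBasis ℝ K (Fin.castLE hK j)
  have hq : Orthonormal ℝ q :=
    ((stdOrthonormalBasis ℝ K).orthonormal.comp _ (Fin.castLE_injective hK)).comp_linearIsometry
      K.subtypeₗᵢ
  have hqK : ∀ j, W *ᵥ q j = 0 := fun j =>
    congrArg WithLp.ofLp (stdOrthonormalBasis ℝ K (Fin.castLE hK j)).2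
  refine ⟨of fun i j => q j i, ?_, ?_⟩
  · ext j j'
    have h := orthonormal_iff_ite.1 hq j j'
    simp only [PiLp.inner_apply, RCLike.inner_apply, conj_trivial] at h
    rw [mul_apply, one_apply, ← h]
    exact sum_congr rfl fun i _ => mul_comm _ _
  · ext x j
    simpa only [mul_apply, of_apply, mulVec, dotProduct, Pi.zero_apply, zero_apply] using
      congrFun (hqK j) x

end Matrix

section padding

variable {α : Type*} {m n : Type*} {r p : ℕ}

def Fin.padZero [Zero α] (v : Fin r → α) : Fin p → α :=
  fun j => if hj : (j : ℕ) < r then v ⟨j, hj⟩ else 0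

def Matrix.padCols [Zero α] (p : ℕ) (M : Matrix m (Fin r) α) : Matrix m (Fin p) α :=
  of fun x => Fin.padZero (M x)

namespace Fin

@[simp]
theorem padZero_castLE [Zero α] (h : r ≤ p) (v : Fin r → α) (i : Fin r) :
    padZero v (castLE h i) = v i := by
  simp [padZero]

theorem padZero_of_le [Zero α] (v : Fin r → α) {j : Fin p} (hj : r ≤ j) : padZero v j = 0 := by
  simp [padZero, hj.not_gt]

theorem padZero_eq_zero_of_notMem_range [Zero α] (h : r ≤ p) (v : Fin r → α) {j : Fin p}
    (hj : j ∉ Set.range (castLE h)) : padZero v j = 0 :=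
  padZero_of_le v <| not_lt.1 fun hjr => hj ⟨⟨j, hjr⟩, rfl⟩

theorem sum_mul_padZero [NonUnitalNonAssocSemiring α] (h : r ≤ p) (f : Fin p → α)
    (v : Fin r → α) : ∑ j, f j * padZero v j = ∑ i, f (castLE h i) * v i :=
  (Fintype.sum_of_injective _ (castLE_injective h) _ _
    (fun _ hj => by rw [padZero_eq_zero_of_notMem_range h v hj, mul_zero])
    (fun i => by rw [padZero_castLE])).symm

theorem sum_Ici_castLE_padZero [AddCommMonoid α] (h : r ≤ p) (v : Fin r → α) (k : Fin r) :
    ∑ j ∈ Ici (castLE h k), padZero v j = ∑ i ∈ Ici k, v i :=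
  (sum_of_injOn _ (castLE_injective h).injOn (fun i hi => by simpa using hi)
    (fun j hjk hj => padZero_eq_zero_of_notMem_range h v fun ⟨i, hi⟩ =>
      hj ⟨i, by simpa [← hi] using hjk, hi⟩)
    (fun i _ => (padZero_castLE h v i).symm)).symm

end Fin

namespace Matrix

theorem padCols_mul_transpose_padCols [Fintype m] [Fintype n] [NonUnitalNonAssocSemiring α]
    (h : r ≤ p) (M : Matrix m (Fin r) α) (N : Matrix n (Fin r) α) :
    padCols p M * (padCols p N)ᵀ = M * Nᵀ := by
  ext x y
  simp only [mul_apply, transpose_apply, padCols, of_apply]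
  rw [Fin.sum_mul_padZero h]
  simp only [Fin.padZero_castLE]

theorem sum_sq_padCols [Fintype m] [Semiring α] (M : Matrix m (Fin r) α) (j : Fin p) :
    ∑ x, padCols p M x j ^ 2 = Fin.padZero (fun i => ∑ x, M x i ^ 2) j := by
  by_cases hj : (j : ℕ) < r <;> simp [padCols, Fin.padZero, hj]

end Matrix

end padding

section factorization

variable {μ ν : Type*} [Fintype μ] [Fintype ν] {r : ℕ} {L : Matrix μ (Fin r) ℝ}
  {R : Matrix ν (Fin r) ℝ} {d : Fin r → ℝ}

theorem sum_Ici_le_sum_compl_colNormSq {ρ : Type*} [Fintype ρ] [DecidableEq ρ]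
    (hL : Lᵀ * L = 1) (hR : Rᵀ * R = 1) (hd : Antitone d) {B : Matrix μ ρ ℝ} {C : Matrix ν ρ ℝ}
    (hBC : B * Cᵀ = L * diagonal d * Rᵀ) (k : Fin r) (S : Finset ρ) (hS : #S ≤ k) :
    ∑ i ∈ Ici k, d i ≤ ∑ j ∈ Sᶜ, (∑ x, B x j ^ 2 + ∑ y, C y j ^ 2) / 2 := by
  -- `Q` is orthogonal to `Lᵀ Bⱼ` for `j ∈ S`, so these columns drop out of the trace below
  obtain ⟨Q, hQ, hWQ⟩ := exists_transpose_mul_self_eq_one_mul_eq_zero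
    ((Bᵀ * L).submatrix ((↑) : S → ρ) id) (s := r - k) (by simp; omega)
  set U := L * Q
  set V := R * Q
  have hU : Uᵀ * U = 1 := by
    rw [transpose_mul, Matrix.mul_assoc, ← Matrix.mul_assoc Lᵀ, hL, Matrix.one_mul, hQ]
  have hV : Vᵀ * V = 1 := by
    rw [transpose_mul, Matrix.mul_assoc, ← Matrix.mul_assoc Rᵀ, hR, Matrix.one_mul, hQ]
  have hrow_sum : ∑ i, Q i ⬝ᵥ Q i = #(Ici k) := by
    have h := trace_transpose_mul_diagonal_mul Q fun _ => (1 : ℝ)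
    rw [diagonal_one, Matrix.mul_one, hQ, trace_one, Fintype.card_fin] at h
    simpa [Fin.card_Ici] using h.symm
  have htrace : trace (Qᵀ * diagonal d * Q) = ∑ j, (Uᵀ *ᵥ Bᵀ j) ⬝ᵥ (Vᵀ *ᵥ Cᵀ j) := by
    have hdiag : diagonal d = Lᵀ * (B * Cᵀ) * R := by
      rw [hBC, ← Matrix.mul_assoc, ← Matrix.mul_assoc, hL, Matrix.one_mul, Matrix.mul_assoc, hR,
        Matrix.mul_one]
    have hfac : Qᵀ * diagonal d * Q = (Uᵀ * B) * (Vᵀ * C)ᵀ := by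
      simp only [hdiag, U, V, transpose_mul, transpose_transpose, Matrix.mul_assoc]
    rw [hfac, trace_mul_comm]
    exact sum_congr rfl fun j _ => dotProduct_comm (Vᵀ *ᵥ Cᵀ j) (Uᵀ *ᵥ Bᵀ j)
  have hS_zero : ∀ j ∈ S, Uᵀ *ᵥ Bᵀ j = 0 := fun j hj => by
    have h : (Bᵀ * L * Q) j = 0 := congrFun hWQ ⟨j, hj⟩
    rw [Matrix.mul_assoc] at h
    rwa [mulVec_transpose]
  calc ∑ i ∈ Ici k, d i ≤ ∑ i, d i * (Q i ⬝ᵥ Q i) :=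
        sum_le_sum_mul_of_le_threshold _ (fun i hi => hd (mem_Ici.1 hi))
          (fun i hi => hd (not_le.1 (mt mem_Ici.2 hi)).le)
          (fun i => dotProduct_star_self_nonneg (Q i)) (dotProduct_row_self_le_one hQ) hrow_sum
    _ = ∑ j, (Uᵀ *ᵥ Bᵀ j) ⬝ᵥ (Vᵀ *ᵥ Cᵀ j) :=
        (trace_transpose_mul_diagonal_mul Q d).symm.trans htrace
    _ = ∑ j ∈ Sᶜ, (Uᵀ *ᵥ Bᵀ j) ⬝ᵥ (Vᵀ *ᵥ Cᵀ j) := by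
        rw [← sum_add_sum_compl S, sum_eq_zero fun j hj => by rw [hS_zero j hj, zero_dotProduct],
          zero_add]
    _ ≤ _ := sum_le_sum fun j _ => (dotProduct_le_add_div_two _ _).trans <| by
        have hB := dotProduct_transpose_mulVec_self_le hU (Bᵀ j)
        have hC := dotProduct_transpose_mulVec_self_le hV (Cᵀ j)
        simp only [dotProduct, transpose_apply, ← sq] at hB hC ⊢
        linarith

theorem sum_castLE_mul_le_sum_mul_colNormSq {p : ℕ} (hrp : r ≤ p) (hL : Lᵀ * L = 1)
    (hR : Rᵀ * R = 1) (hd : Antitone d) {B : Matrix μ (Fin p) ℝ} {C : Matrix ν (Fin p) ℝ}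
    (hBC : B * Cᵀ = L * diagonal d * Rᵀ) {a : Fin p → ℝ} (ha0 : ∀ i, 0 ≤ a i) (ha : Monotone a) :
    ∑ i, a (Fin.castLE hrp i) * d i ≤ ∑ j, a j * ((∑ x, B x j ^ 2 + ∑ y, C y j ^ 2) / 2) := by
  rw [← Fin.sum_mul_padZero hrp]
  refine sum_mul_le_sum_mul_of_tail_sum_le univ (ha.monotoneOn _) (fun i _ => ha0 i)
    fun k _ => ?_
  simp only [filter_le_eq_Ici]
  by_cases hk : (k : ℕ) < r
  · obtain ⟨k, rfl⟩ : ∃ k₀ : Fin r, Fin.castLE hrp k₀ = k := ⟨⟨k, hk⟩, rfl⟩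
    have hcompl : (Iio (Fin.castLE hrp k))ᶜ = Ici (Fin.castLE hrp k) := by ext; simp
    rw [Fin.sum_Ici_castLE_padZero, ← hcompl]
    exact sum_Ici_le_sum_compl_colNormSq hL hR hd hBC k _ (by simp)
  · rw [sum_eq_zero fun j hj =>
      Fin.padZero_of_le d ((not_lt.1 hk).trans (Fin.le_def.1 (mem_Ici.1 hj)))]
    exact sum_nonneg fun j _ => by positivity

theorem padCols_sqrt_mul_transpose_padCols_sqrt {p : ℕ} (hrp : r ≤ p) (L : Matrix μ (Fin r) ℝ)
    (R : Matrix ν (Fin r) ℝ) (hd : ∀ i, 0 ≤ d i) :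
    padCols p (of fun x i => L x i * √(d i)) * (padCols p (of fun y i => R y i * √(d i)))ᵀ =
      L * diagonal d * Rᵀ := by
  have hL : (of fun x i => L x i * √(d i)) = L * diagonal fun i => √(d i) := by
    ext; simp [mul_diagonal]
  have hR : (of fun y i => R y i * √(d i)) = R * diagonal fun i => √(d i) := by
    ext; simp [mul_diagonal]
  rw [padCols_mul_transpose_padCols hrp, hL, hR, transpose_mul, diagonal_transpose,
    Matrix.mul_assoc, ← Matrix.mul_assoc (diagonal _), diagonal_mul_diagonal, ← Matrix.mul_assoc]
  congr
  ext i
  exact Real.mul_self_sqrt (hd i)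

theorem sum_sq_padCols_mul_sqrt {p : ℕ} (hL : Lᵀ * L = 1) (hd : ∀ i, 0 ≤ d i) (j : Fin p) :
    ∑ x, padCols p (of fun x i => L x i * √(d i)) x j ^ 2 = Fin.padZero d j := by
  rw [sum_sq_padCols]
  congr 1
  funext i
  simp [mul_pow, Real.sq_sqrt (hd i), ← sum_mul, sum_sq_col_eq_one hL]

theorem sum_mul_colNormSq_padCols_sqrt {p : ℕ} (hrp : r ≤ p) (hL : Lᵀ * L = 1)
    (hR : Rᵀ * R = 1) (hd : ∀ i, 0 ≤ d i) (a : Fin p → ℝ) :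
    ∑ j, a j * (∑ x, padCols p (of fun x i => L x i * √(d i)) x j ^ 2 +
      ∑ y, padCols p (of fun y i => R y i * √(d i)) y j ^ 2) / 2 =
      ∑ i, a (Fin.castLE hrp i) * d i := by
  simp only [sum_sq_padCols_mul_sqrt hL hd, sum_sq_padCols_mul_sqrt hR hd, mul_div_assoc,
    add_self_div_two]
  exact Fin.sum_mul_padZero hrp a d

end factorization

/-- For a rank-r matrix X with compact SVD X = L Σ Rᵀ and nonnegative
non-decreasing weights a ∈ ℝ^p (p ≥ r), every factorization X = B Cᵀ with p
columns satisfies Σᵢ aᵢ(‖Bᵢ‖²+‖Cᵢ‖²)/2 ≥ Σᵢ aᵢ σᵢ(X), with equality for the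
zero-padded B = L√Σ, C = R√Σ. -/
theorem weighted_nuclear_norm_eq_min_factorization {m n r p : ℕ} (hrp : r ≤ p)
    (X : Matrix (Fin m) (Fin n) ℝ)
    (L : Matrix (Fin m) (Fin r) ℝ) (R : Matrix (Fin n) (Fin r) ℝ) (d : Fin r → ℝ)
    (hL : Lᵀ * L = 1) (hR : Rᵀ * R = 1) (hd : ∀ i, 0 < d i) (hdA : Antitone d)
    (hX : X = L * Matrix.diagonal d * Rᵀ)
    (a : Fin p → ℝ) (ha0 : ∀ i, 0 ≤ a i) (haM : Monotone a) :
    (∀ (B : Matrix (Fin m) (Fin p) ℝ) (C : Matrix (Fin n) (Fin p) ℝ),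
        B * Cᵀ = X →
        ∑ i : Fin r, a (Fin.castLE hrp i) * d i ≤
          ∑ i : Fin p, a i * ((∑ j, B j i ^ 2) + ∑ j, C j i ^ 2) / 2) ∧
    ((Matrix.of fun j (i : Fin p) =>
          if h : (i : ℕ) < r then L j ⟨i, h⟩ * Real.sqrt (d ⟨i, h⟩) else 0) *
        (Matrix.of fun j (i : Fin p) =>
          if h : (i : ℕ) < r then R j ⟨i, h⟩ * Real.sqrt (d ⟨i, h⟩) else 0)ᵀ = X ∧
      ∑ i : Fin p, a i *
          ((∑ j, (Matrix.of fun j (i : Fin p) =>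
              if h : (i : ℕ) < r then L j ⟨i, h⟩ * Real.sqrt (d ⟨i, h⟩) else 0) j i ^ 2) +
            ∑ j, (Matrix.of fun j (i : Fin p) =>
              if h : (i : ℕ) < r then R j ⟨i, h⟩ * Real.sqrt (d ⟨i, h⟩) else 0) j i ^ 2) / 2 =
        ∑ i : Fin r, a (Fin.castLE hrp i) * d i) := by
  have hd0 : ∀ i, 0 ≤ d i := fun i => (hd i).le
  subst hX
  refine ⟨fun B C hBC => ?_, padCols_sqrt_mul_transpose_padCols_sqrt hrp L R hd0,
    sum_mul_colNormSq_padCols_sqrt hrp hL hR hd0 a⟩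
  simpa only [mul_div_assoc] using
    sum_castLE_mul_le_sum_mul_colNormSq hrp hL hR hdA hBC ha0 haM
end

section
/- Let f : ℝ^p_{≥0} → ℝ be quasi-concave, lower semi-continuous, and coordinatewise non-decreasing. Let σ₁ ≥ … ≥ σ_r > 0 be the singular values of a rank-r matrix X and let p > r. Then any minimizer γ* of f(γ) subject to γ = (1/2)(Vᵀ⊙Vᵀ + Hᵀ⊙Hᵀ)σ over V, H ∈ ℝ^{r×p} with VHᵀ = I_{r×r} can be taken of the form γ* = Π_{p×r}σ, where Π_{p×r} consists of the first r columns of a p×p permutation matrix; equivalently γ* is a permutation of (σ₁,…,σ_r,0,…,0) ∈ ℝ^p. -/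
/-!
Let `P` be the finite set of padded permutations of `σ`. Every feasible `γ` lies in
`conv P + ℝ^p_{≥0}`: otherwise a separating functional `c` would be nonnegative (that set is
stable under adding the orthant) with `⟨c, γ⟩ < ⟨c, x⟩` for all `x ∈ P`, whereas placing
`σ₁ ≥ … ≥ σ_r` on the `r` smallest entries of `c`, in increasing order, gives an `x ∈ P` with
`⟨c, x⟩ ≤ ⟨c, γ⟩`. That inequality follows by summation by parts, over the rows and then over
the sorted columns, from `|R| + |S| - p ≤ ∑_{i ∈ R, j ∈ S} (V_ij² + H_ij²) / 2`, a consequence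
of `V Hᵀ = I` obtained by taking the trace over the orthogonal complement of the columns of `V`
outside `S`. Quasi-concavity of `f` then puts a minimum of `f` on `conv P` at a point of `P`, and
monotonicity shows that adding the orthant cannot decrease `f`.
-/

open Matrix BigOperators

open Finset Pointwise

theorem Finset.sum_mul_nonneg_of_antitoneOn {α R : Type*} [LinearOrder α] [CommRing R]
    [LinearOrder R] [IsStrictOrderedRing R] (s : Finset α) {d x : α → R}
    (hd : AntitoneOn d s) (hd0 : ∀ i ∈ s, 0 ≤ d i)
    (hx : ∀ k ∈ s, 0 ≤ ∑ i ∈ s with i ≤ k, x i) : 0 ≤ ∑ i ∈ s, d i * x i := by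
  classical
  induction s using Finset.induction_on_max generalizing d with
  | empty => simp
  | insert a s ha ih =>
    have has : a ∉ s := fun h => (ha a h).false
    have hshift : 0 ≤ ∑ i ∈ s, (d i - d a) * x i := by
      refine ih (fun i hi j hj hij => sub_le_sub_right (hd (mem_insert_of_mem hi)
        (mem_insert_of_mem hj) hij) _) (fun i hi => sub_nonneg.2 (hd (mem_insert_of_mem hi)
        (mem_insert_self a s) (ha i hi).le)) (fun k hk => ?_)
      have := hx k (mem_insert_of_mem hk)
      rwa [filter_insert, if_neg (not_le.2 (ha k hk))] at this
    have htotal : 0 ≤ ∑ i ∈ insert a s, x i := by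
      simpa [filter_true_of_mem fun i hi => (mem_insert.1 hi).elim le_of_eq
        fun h => (ha i h).le] using hx a (mem_insert_self a s)
    have hsplit : ∑ i ∈ insert a s, d i * x i
        = d a * ∑ i ∈ insert a s, x i + ∑ i ∈ s, (d i - d a) * x i := by
      simp only [sum_insert has, mul_add, mul_sum, sub_mul, sum_sub_distrib]
      ring
    rw [hsplit]
    exact add_nonneg (mul_nonneg (hd0 a (mem_insert_self a s)) htotal) hshift

theorem Finset.sum_mul_nonneg_of_monotoneOn {α R : Type*} [LinearOrder α] [CommRing R]
    [LinearOrder R] [IsStrictOrderedRing R] (s : Finset α) {d x : α → R}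
    (hd : MonotoneOn d s) (hd0 : ∀ i ∈ s, 0 ≤ d i)
    (hx : ∀ k ∈ s, 0 ≤ ∑ i ∈ s with k ≤ i, x i) : 0 ≤ ∑ i ∈ s, d i * x i :=
  Finset.sum_mul_nonneg_of_antitoneOn (α := αᵒᵈ) s hd.dual_left hd0 hx

theorem Orthonormal.sum_inner_mul_inner_le {ι E : Type*} [NormedAddCommGroup E]
    [InnerProductSpace ℝ E] {w : ι → E} (hw : Orthonormal ℝ w) (s : Finset ι) (a b : E) :
    ∑ t ∈ s, inner ℝ (w t) a * inner ℝ (w t) b ≤ (‖a‖ ^ 2 + ‖b‖ ^ 2) / 2 := by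
  have ha := hw.sum_inner_products_le (s := s) a
  have hb := hw.sum_inner_products_le (s := s) b
  simp only [Real.norm_eq_abs, sq_abs] at ha hb
  calc ∑ t ∈ s, inner ℝ (w t) a * inner ℝ (w t) b
      ≤ ∑ t ∈ s, (inner ℝ (w t) a ^ 2 + inner ℝ (w t) b ^ 2) / 2 :=
        sum_le_sum fun t _ => by nlinarith [sq_nonneg (inner ℝ (w t) a - inner ℝ (w t) b)]
    _ ≤ (‖a‖ ^ 2 + ‖b‖ ^ 2) / 2 := by
        rw [← sum_div, sum_add_distrib]; linarith

theorem QuasiconcaveOn.le_of_mem_convexHull {𝕜 E β : Type*} [Semiring 𝕜] [PartialOrder 𝕜]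
    [AddCommMonoid E] [Module 𝕜 E] [LE β] {s : Set E} {f : E → β} (hf : QuasiconcaveOn 𝕜 s f)
    {P : Set E} (hPs : P ⊆ s) {a : β} (ha : ∀ x ∈ P, a ≤ f x) {z : E}
    (hz : z ∈ convexHull 𝕜 P) : a ≤ f z :=
  (convexHull_min (t := {x ∈ s | a ≤ f x}) (fun x hx => ⟨hPs hx, ha x hx⟩) (hf a) hz).2

theorem mem_convexHull_add_Ici_of_forall_exists_dotProduct_le {n : Type*} [Fintype n]
    [DecidableEq n] {P : Set (n → ℝ)} (hP : P.Finite) {γ : n → ℝ}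
    (h : ∀ c, 0 ≤ c → ∃ x ∈ P, c ⬝ᵥ x ≤ c ⬝ᵥ γ) :
    γ ∈ convexHull ℝ P + Set.Ici (0 : n → ℝ) := by
  by_contra hγ
  obtain ⟨φ, u, hφγ, hφK⟩ := geometric_hahn_banach_point_closed
    ((convex_convexHull ℝ P).add (convex_Ici 0))
    (isClosed_Ici.add_left_of_isCompact (hP.isCompact_convexHull (𝕜 := ℝ))) hγ
  obtain ⟨c, hφ⟩ : ∃ c : n → ℝ, ∀ x, φ x = c ⬝ᵥ x := by
    refine ⟨fun j => φ (Pi.single j 1), fun x => ?_⟩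
    conv_lhs => rw [← univ_sum_single x]
    rw [map_sum, dotProduct]
    refine sum_congr rfl fun i _ => ?_
    rw [show Pi.single i (x i) = x i • Pi.single i (1 : ℝ) by
      rw [← Pi.single_smul, smul_eq_mul, mul_one], map_smul, smul_eq_mul, mul_comm]
  have mem_K {x : n → ℝ} (hx : x ∈ P) {y : n → ℝ} (hy : 0 ≤ y) : u < c ⬝ᵥ (x + y) := by
    rw [← hφ]; exact hφK _ (Set.add_mem_add (subset_convexHull ℝ P hx) hy)
  obtain ⟨x₀, hx₀, -⟩ := h 0 le_rfl
  have hc : 0 ≤ c := by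
    intro j
    show 0 ≤ c j
    by_contra! hj
    have hx₀u := mem_K hx₀ le_rfl
    rw [add_zero] at hx₀u
    -- moving from `x₀` along the `j`-th axis by `t` brings `c ⬝ᵥ _` down to `u`
    set t := (c ⬝ᵥ x₀ - u) / -c j
    have ht : 0 ≤ t := div_nonneg (by linarith) (by linarith)
    have := mem_K hx₀ (smul_nonneg ht (Pi.single_nonneg.2 zero_le_one : 0 ≤ Pi.single j (1 : ℝ)))
    rw [dotProduct_add, dotProduct_smul, dotProduct_single, smul_eq_mul, mul_one] at this
    have htc : t * -c j = c ⬝ᵥ x₀ - u := div_mul_cancel₀ _ (neg_ne_zero.2 hj.ne)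
    linarith
  obtain ⟨x, hx, hxγ⟩ := h c hc
  have := mem_K hx le_rfl
  rw [add_zero] at this
  rw [hφ] at hφγ
  linarith

namespace Matrix

variable {m n : Type*} [Fintype n] [DecidableEq m]

theorem vecMul_dotProduct_vecMul_of_mul_transpose_eq_one [Fintype m] {V H : Matrix m n ℝ}
    (hVH : V * Hᵀ = 1) (x : m → ℝ) : x ᵥ* V ⬝ᵥ x ᵥ* H = x ⬝ᵥ x := by
  rw [← mulVec_transpose H, dotProduct_mulVec, vecMul_vecMul, hVH, vecMul_one]

/-- With `U` the span of the columns of `V` outside `S`, each unit vector `w ⊥ U` satisfies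
`1 = ∑ⱼ ⟪w, vⱼ⟫⟪w, hⱼ⟫ = ∑_{j ∈ S} ⟪w, vⱼ⟫⟪w, hⱼ⟫`; summing over an orthonormal basis of `Uᗮ`
and applying Bessel's inequality column by column gives the bound. -/
theorem card_sub_card_compl_le_sum_of_mul_transpose_eq_one [Fintype m] [DecidableEq n]
    {V H : Matrix m n ℝ} (hVH : V * Hᵀ = 1) (S : Finset n) :
    (Fintype.card m : ℝ) - #Sᶜ ≤ ∑ j ∈ S, ∑ i, (V i j ^ 2 + H i j ^ 2) / 2 := by
  let col : Matrix m n ℝ → n → EuclideanSpace ℝ m := fun A j => WithLp.toLp 2 (Aᵀ j)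
  have inner_col (A : Matrix m n ℝ) (x : EuclideanSpace ℝ m) (j : n) :
      inner ℝ x (col A j) = (x.ofLp ᵥ* A) j := by
    simp [col, EuclideanSpace.inner_eq_star_dotProduct, vecMul, dotProduct, mul_comm]
  have norm_col (A : Matrix m n ℝ) (j : n) : ‖col A j‖ ^ 2 = ∑ i, A i j ^ 2 := by
    simp [col, EuclideanSpace.norm_sq_eq]
  let U := Submodule.span ℝ ((Sᶜ.image (col V) : Finset _) : Set (EuclideanSpace ℝ m))
  let b := stdOrthonormalBasis ℝ Uᗮ
  let w := fun t => (b t : EuclideanSpace ℝ m)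
  have hw : Orthonormal ℝ w := b.orthonormal.comp_linearIsometry Uᗮ.subtypeₗᵢ
  have hdim : (Fintype.card m : ℝ) - #Sᶜ ≤ Module.finrank ℝ Uᗮ := by
    have hU : (Module.finrank ℝ U : ℝ) ≤ #Sᶜ := by
      exact_mod_cast (finrank_span_finset_le_card _).trans card_image_le
    have hsum := U.finrank_add_finrank_orthogonal
    rw [finrank_euclideanSpace] at hsum
    have : (Module.finrank ℝ U : ℝ) + Module.finrank ℝ Uᗮ = Fintype.card m := by
      exact_mod_cast hsum
    linarith
  have hunit (t) : ∑ j, inner ℝ (w t) (col V j) * inner ℝ (w t) (col H j) = 1 := by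
    simp only [inner_col]
    rw [← dotProduct, vecMul_dotProduct_vecMul_of_mul_transpose_eq_one hVH,
      ← one_pow 2, ← hw.1 t, ← real_inner_self_eq_norm_sq,
      EuclideanSpace.inner_eq_star_dotProduct, star_trivial]
  have hvanish (t) : ∀ j ∈ Sᶜ, inner ℝ (w t) (col V j) * inner ℝ (w t) (col H j) = 0 := by
    intro j hj
    rw [Submodule.inner_left_of_mem_orthogonal (Submodule.subset_span
      (mem_image_of_mem _ hj)) (b t).2, zero_mul]
  calc (Fintype.card m : ℝ) - #Sᶜ ≤ Module.finrank ℝ Uᗮ := hdim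
    _ = ∑ t, ∑ j, inner ℝ (w t) (col V j) * inner ℝ (w t) (col H j) := by simp [hunit]
    _ = ∑ j ∈ S, ∑ t, inner ℝ (w t) (col V j) * inner ℝ (w t) (col H j) := by
      rw [sum_comm, ← sum_add_sum_compl S,
        sum_eq_zero fun j hj => sum_eq_zero fun t _ => hvanish t j hj, add_zero]
    _ ≤ ∑ j ∈ S, (‖col V j‖ ^ 2 + ‖col H j‖ ^ 2) / 2 :=
      sum_le_sum fun j _ => hw.sum_inner_mul_inner_le _ _ _
    _ = ∑ j ∈ S, ∑ i, (V i j ^ 2 + H i j ^ 2) / 2 := by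
      simp only [norm_col, ← sum_div, sum_add_distrib]

theorem card_sub_card_compl_le_sum_rows_of_mul_transpose_eq_one [DecidableEq n]
    {V H : Matrix m n ℝ}
    (hVH : V * Hᵀ = 1) (R : Finset m) (S : Finset n) :
    (#R : ℝ) - #Sᶜ ≤ ∑ j ∈ S, ∑ i ∈ R, (V i j ^ 2 + H i j ^ 2) / 2 := by
  have hR : V.submatrix ((↑) : R → m) id * (H.submatrix ((↑) : R → m) id)ᵀ = 1 := by
    rw [transpose_submatrix, ← submatrix_mul _ _ _ _ _ Function.bijective_id, hVH,
      submatrix_one _ Subtype.val_injective]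
  have := card_sub_card_compl_le_sum_of_mul_transpose_eq_one hR S
  simp only [Fintype.card_coe, submatrix_apply, id] at this
  refine this.trans_eq (sum_congr rfl fun j _ => ?_)
  exact sum_coe_sort R fun i => (V i j ^ 2 + H i j ^ 2) / 2

end Matrix

def padded {m n : Type*} [Fintype m] [DecidableEq n] (d : m → ℝ) (e : m → n) : n → ℝ :=
  fun j => ∑ i, if e i = j then d i else 0

section Padded

variable {m n : Type*} [Fintype m] [DecidableEq n]

theorem dotProduct_padded [Fintype n] (c : n → ℝ) (d : m → ℝ) (e : m → n) :
    c ⬝ᵥ padded d e = ∑ i, d i * c (e i) := by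
  simp [padded, dotProduct, mul_sum, mul_comm, sum_comm (γ := n)]

theorem padded_nonneg {d : m → ℝ} (hd : 0 ≤ d) (e : m → n) : 0 ≤ padded d e :=
  fun j => sum_nonneg fun i _ => by split_ifs; exacts [hd i, le_rfl]

theorem exists_mul_transpose_eq_one_and_padded_eq [Fintype n] [DecidableEq m] {e : m → n}
    (he : Function.Injective e) (d : m → ℝ) :
    ∃ V H : Matrix m n ℝ, V * Hᵀ = 1 ∧
      padded d e = fun j => ∑ i, d i * (V i j ^ 2 + H i j ^ 2) / 2 := by
  refine ⟨(1 : Matrix n n ℝ).submatrix e id, (1 : Matrix n n ℝ).submatrix e id, ?_, ?_⟩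
  · rw [transpose_submatrix, ← submatrix_mul _ _ _ _ _ Function.bijective_id, transpose_one,
      mul_one, submatrix_one _ he]
  · ext j
    refine sum_congr rfl fun i _ => ?_
    by_cases h : e i = j <;> norm_num [h, one_apply]

end Padded

theorem sum_Iic_sort_le_sum_mul {p : ℕ} {c q : Fin p → ℝ} (hc : 0 ≤ c) (hq : 0 ≤ q)
    (a : Fin p) (hS : ∀ S : Finset (Fin p), ((a : ℕ) + 1 : ℝ) - #Sᶜ ≤ ∑ j ∈ S, q j) :
    ∑ l ∈ Iic a, c (Tuple.sort c l) ≤ ∑ j, c j * q j := by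
  set σ := Tuple.sort c
  have key : 0 ≤ ∑ l, c (σ l) * (q (σ l) - if l ≤ a then 1 else 0) := by
    refine sum_mul_nonneg_of_monotoneOn univ ((Tuple.monotone_sort c).monotoneOn _)
      (fun l _ => hc _) fun k _ => ?_
    have hIcc : ({l ∈ Ici k | l ≤ a} : Finset (Fin p)) = Icc k a := by ext; simp
    rw [filter_le_eq_Ici, sum_sub_distrib, sum_boole, hIcc, Fin.card_Icc, sub_nonneg]
    have hmass : ((a : ℕ) + 1 : ℝ) - k ≤ ∑ l ∈ Ici k, q (σ l) := by
      have := hS ((Ici k).map σ.toEmbedding)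
      rwa [sum_map, card_compl, card_map, Fin.card_Ici, Fintype.card_fin,
        Nat.sub_sub_self k.is_le'] at this
    rcases le_or_gt ((a : ℕ) + 1) k with hak | hka
    · rw [Nat.sub_eq_zero_of_le hak, Nat.cast_zero]
      exact sum_nonneg fun l _ => hq _
    · rwa [Nat.cast_sub hka.le, Nat.cast_add_one]
  rw [← Equiv.sum_comp σ (fun j => c j * q j), ← filter_ge_eq_Iic]
  simpa [mul_sub, sum_sub_distrib, sum_ite, ← sum_filter] using key

theorem exists_injective_dotProduct_padded_le {r p : ℕ} (hrp : r ≤ p) {d : Fin r → ℝ}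
    (hd0 : 0 ≤ d) (hd : Antitone d) {V H : Matrix (Fin r) (Fin p) ℝ} (hVH : V * Hᵀ = 1)
    {c : Fin p → ℝ} (hc : 0 ≤ c) :
    ∃ e : Fin r → Fin p, Function.Injective e ∧
      c ⬝ᵥ padded d e ≤ c ⬝ᵥ fun j => ∑ i, d i * (V i j ^ 2 + H i j ^ 2) / 2 := by
  set σ := Tuple.sort c
  refine ⟨σ ∘ Fin.castLE hrp, σ.injective.comp (Fin.castLE_injective hrp), ?_⟩
  set w : Fin r → Fin p → ℝ := fun i j => (V i j ^ 2 + H i j ^ 2) / 2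
  have hγ : (c ⬝ᵥ fun j => ∑ i, d i * (V i j ^ 2 + H i j ^ 2) / 2)
      = ∑ i, d i * ∑ j, c j * w i j := by
    simp only [dotProduct, mul_sum, w]
    rw [sum_comm]
    exact sum_congr rfl fun i _ => sum_congr rfl fun j _ => by ring
  rw [dotProduct_padded, hγ, ← sub_nonneg, ← sum_sub_distrib]
  simp_rw [← mul_sub]
  refine sum_mul_nonneg_of_antitoneOn univ (hd.antitoneOn _) (fun i _ => hd0 i) fun k _ => ?_
  rw [filter_ge_eq_Iic, sum_sub_distrib, sub_nonneg]
  have hprefix : ∑ i ∈ Iic k, c ((σ ∘ Fin.castLE hrp) i)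
      = ∑ l ∈ Iic (Fin.castLE hrp k), c (σ l) := by
    rw [← Fin.map_castLEEmb_Iic, sum_map]
    rfl
  rw [hprefix, sum_comm]
  simp_rw [← mul_sum]
  refine sum_Iic_sort_le_sum_mul hc (fun j => sum_nonneg fun i _ => by positivity) _ fun S => ?_
  simpa [Fin.card_Iic] using card_sub_card_compl_le_sum_rows_of_mul_transpose_eq_one hVH (Iic k) S

theorem rectangular_minimizer_is_padded_permutation_general {r p : ℕ} (hrp : r < p)
    (d : Fin r → ℝ) (hd0 : ∀ i, 0 < d i) (hdA : Antitone d)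
    (f : (Fin p → ℝ) → ℝ)
    (hqc : ∀ α : ℝ, Convex ℝ {x : Fin p → ℝ | (∀ i, 0 ≤ x i) ∧ α ≤ f x})
    (hmono : ∀ x y : Fin p → ℝ, (∀ i, x i ≤ y i) → f x ≤ f y)
    (F : Set (Fin p → ℝ))
    (hF : F = {γ | ∃ V H : Matrix (Fin r) (Fin p) ℝ, V * Hᵀ = 1 ∧
        γ = fun j => ∑ i, d i * (V i j ^ 2 + H i j ^ 2) / 2}) :
    (∃ γ₀ ∈ F, ∀ γ ∈ F, f γ₀ ≤ f γ) →
    ∃ γs ∈ F, (∀ γ ∈ F, f γs ≤ f γ) ∧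
      ∃ ι : Fin r → Fin p, Function.Injective ι ∧
        γs = fun j => ∑ i, if ι i = j then d i else 0 := by
  rintro -
  have hd0' : 0 ≤ d := fun i => (hd0 i).le
  have hqc' : QuasiconcaveOn ℝ (Set.Ici 0) f := hqc
  set P := padded d '' {e : Fin r → Fin p | Function.Injective e}
  obtain ⟨ιs, hιs, hmin⟩ := Set.exists_min_image {e : Fin r → Fin p | Function.Injective e}
    (fun e => f (padded d e)) (Set.toFinite _) ⟨_, Fin.castLE_injective hrp.le⟩
  have hFK (γ) (hγ : γ ∈ F) : γ ∈ convexHull ℝ P + Set.Ici 0 := by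
    obtain ⟨V, H, hVH, rfl⟩ := hF ▸ hγ
    refine mem_convexHull_add_Ici_of_forall_exists_dotProduct_le (Set.toFinite _) fun c hc => ?_
    obtain ⟨e, he, hle⟩ := exists_injective_dotProduct_padded_le hrp.le hd0' hdA hVH hc
    exact ⟨_, ⟨e, he, rfl⟩, hle⟩
  refine ⟨padded d ιs, hF ▸ exists_mul_transpose_eq_one_and_padded_eq hιs d, fun γ hγ => ?_,
    ιs, hιs, rfl⟩
  obtain ⟨z, hz, w, hw, rfl⟩ := hFK γ hγ
  calc f (padded d ιs)
      ≤ f z := hqc'.le_of_mem_convexHull (by rintro _ ⟨e, -, rfl⟩; exact padded_nonneg hd0' e)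
        (by rintro _ ⟨e, he, rfl⟩; exact hmin e he) hz
    _ ≤ f (z + w) := hmono _ _ fun i => le_add_of_nonneg_right (hw i)

/-- In the rectangular case (V, H ∈ ℝ^{r×p}, p > r, V Hᵀ = I), if the problem
min f(γ) over γ = (1/2)(Vᵀ⊙Vᵀ + Hᵀ⊙Hᵀ)σ admits a minimizer, then there is a
minimizer which is a permutation of the zero-padded singular value vector
(σ₁,…,σ_r,0,…,0). -/
theorem rectangular_minimizer_is_padded_permutation {r p : ℕ} (hrp : r < p)
    (d : Fin r → ℝ) (hd0 : ∀ i, 0 < d i) (hdA : Antitone d)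
    (f : (Fin p → ℝ) → ℝ)
    (hqc : ∀ α : ℝ, Convex ℝ {x : Fin p → ℝ | (∀ i, 0 ≤ x i) ∧ α ≤ f x})
    (hlsc : LowerSemicontinuous f)
    (hmono : ∀ x y : Fin p → ℝ, (∀ i, x i ≤ y i) → f x ≤ f y)
    (F : Set (Fin p → ℝ))
    (hF : F = {γ | ∃ V H : Matrix (Fin r) (Fin p) ℝ, V * Hᵀ = 1 ∧
        γ = fun j => ∑ i, d i * (V i j ^ 2 + H i j ^ 2) / 2}) :
    (∃ γ₀ ∈ F, ∀ γ ∈ F, f γ₀ ≤ f γ) →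
    ∃ γs ∈ F, (∀ γ ∈ F, f γs ≤ f γ) ∧
      ∃ ι : Fin r → Fin p, Function.Injective ι ∧
        γs = fun j => ∑ i, if ι i = j then d i else 0 :=
  rectangular_minimizer_is_padded_permutation_general hrp d hd0 hdA f hqc hmono F hF
end
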